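/- arXiv:2103.11435 — 6 statements merged into one kernel-verified Lean document; each statement's English description precedes it below -/
import Mathlib

section
/- Let μ be a Borel probability measure on R_+ with finite first moment. Then the U-quantizations U^(N)(μ) := (1/N)∑_{i=1}^N δ_{x_i^(N)(μ)}, where x_i^(N)(μ) := N ∫_{(i-1)/N}^{i/N} F_μ^{-1}(u) du, converge weakly to μ as N → ∞. -/
open MeasureTheory Filter Topology
open scoped ENNReal BigOperators

/-- Empirical measure `(1/N) ∑ δ_{x_i}` on `ℝ`. -/
noncomputable def emp (N : ℕ) (x : Fin N → ℝ) : Measure ℝ :=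
  (N : ℝ≥0∞)⁻¹ • ∑ i : Fin N, Measure.dirac (x i)

/-- Quantile function `F_μ⁻¹(u) = inf {x ∈ ℝ₊ : F_μ(x) ≥ u}`. -/
noncomputable def qf (μ : Measure ℝ) (u : ℝ) : ℝ :=
  sInf {x : ℝ | 0 ≤ x ∧ u ≤ ProbabilityTheory.cdf μ x}

/-- Atoms of the 𝒰-quantization. -/
noncomputable def atomU (μ : Measure ℝ) (N i : ℕ) : ℝ :=
  N * ∫ u in ((i : ℝ) - 1) / N..(i : ℝ) / N, qf μ u

/-- The 𝒰-quantization `𝒰^{(N)}(μ) = (1/N) ∑_{i=1}^N δ_{x_i^{(N)}(μ)}`. -/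
noncomputable def Uquant (μ : Measure ℝ) (N : ℕ) : Measure ℝ :=
  emp N (fun i => atomU μ N (i.1 + 1))

section Aux

open ProbabilityTheory Set

set_option linter.unusedSectionVars false
set_option linter.unusedVariables false

variable (μ : Measure ℝ) [IsProbabilityMeasure μ]

lemma qf_exists {u : ℝ} (hu : u < 1) : ∃ y, 0 ≤ y ∧ u ≤ cdf μ y := by
  have h1 : ∀ᶠ y in atTop, u < cdf μ y :=
    (tendsto_cdf_atTop μ).eventually (eventually_gt_nhds hu)
  obtain ⟨y, hy0, hyu⟩ := (h1.and (eventually_ge_atTop (0:ℝ))).exists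
  exact ⟨y, hyu, hy0.le⟩

lemma qf_bddBelow (u : ℝ) : BddBelow {x : ℝ | 0 ≤ x ∧ u ≤ cdf μ x} :=
  ⟨0, fun x hx => hx.1⟩

lemma qf_mem {u : ℝ} (hu : u < 1) : 0 ≤ qf μ u ∧ u ≤ cdf μ (qf μ u) := by
  obtain ⟨y, hy0, hyu⟩ := qf_exists μ hu
  set S := {x : ℝ | 0 ≤ x ∧ u ≤ cdf μ x} with hS
  have hne : S.Nonempty := ⟨y, hy0, hyu⟩
  have hq0 : 0 ≤ sInf S := le_csInf hne fun x hx => hx.1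
  refine ⟨hq0, ?_⟩
  by_contra h
  push_neg at h
  have hrc : ContinuousWithinAt (cdf μ) (Set.Ici (sInf S)) (sInf S) :=
    (cdf μ).right_continuous (sInf S)
  have hev : ∀ᶠ x in 𝓝[≥] (sInf S), cdf μ x < u := hrc.eventually (eventually_lt_nhds h)
  obtain ⟨b, hb, hsub⟩ := mem_nhdsGE_iff_exists_Ico_subset.mp hev
  obtain ⟨x, hxS, hxb⟩ := exists_lt_of_csInf_lt hne hb
  have hx1 : sInf S ≤ x := csInf_le (qf_bddBelow μ u) hxS
  exact absurd hxS.2 (not_le.mpr (hsub ⟨hx1, hxb⟩))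

lemma qf_le_iff {u x : ℝ} (hu : u < 1) : qf μ u ≤ x ↔ 0 ≤ x ∧ u ≤ cdf μ x := by
  constructor
  · intro h
    obtain ⟨h0, hF⟩ := qf_mem μ hu
    exact ⟨h0.trans h, hF.trans (monotone_cdf μ h)⟩
  · intro hx
    exact csInf_le (qf_bddBelow μ u) hx

lemma qf_mono {u v : ℝ} (huv : u ≤ v) (hv : v < 1) : qf μ u ≤ qf μ v := by
  obtain ⟨y, hy0, hyu⟩ := qf_exists μ hv
  exact csInf_le_csInf (qf_bddBelow μ u) ⟨y, hy0, hyu⟩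
    (fun x hx => ⟨hx.1, huv.trans hx.2⟩)

noncomputable def qfm (μ : Measure ℝ) : ℝ → ℝ :=
  fun u => if u ∈ Set.Ioo (0:ℝ) 1 then qf μ u else 0

lemma measurable_qfm : Measurable (qfm μ) := by
  apply measurable_of_Iic
  intro x
  rcases le_or_gt 0 x with hx | hx
  · have h : qfm μ ⁻¹' Iic x = (Ioo (0:ℝ) 1 ∩ Iic (cdf μ x)) ∪ (Ioo (0:ℝ) 1)ᶜ := by
      ext u
      by_cases hu : u ∈ Ioo (0:ℝ) 1
      · rw [mem_preimage, mem_Iic, qfm, if_pos hu, qf_le_iff μ hu.2]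
        simp only [mem_union, mem_inter_iff, hu, true_and, mem_compl_iff,
          not_true_eq_false, or_false, mem_Iic]
        exact ⟨fun h => h.2, fun h => ⟨hx, h⟩⟩
      · simp [qfm, hu, hx]
    rw [h]
    exact (measurableSet_Ioo.inter measurableSet_Iic).union measurableSet_Ioo.compl
  · have h : qfm μ ⁻¹' Iic x = ∅ := by
      ext u
      simp only [mem_preimage, mem_Iic, mem_empty_iff_false, iff_false, not_le]
      by_cases hu : u ∈ Ioo (0:ℝ) 1
      · rw [qfm, if_pos hu]; exact lt_of_lt_of_le hx (qf_mem μ hu.2).1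
      · rw [qfm, if_neg hu]; exact hx
    rw [h]; exact MeasurableSet.empty

lemma qf_ae_eq : qf μ =ᵐ[volume.restrict (Ioo (0:ℝ) 1)] qfm μ := by
  filter_upwards [ae_restrict_mem measurableSet_Ioo] with u hu
  simp [qfm, hu]

lemma aemeasurable_qf : AEMeasurable (qf μ) (volume.restrict (Ioo (0:ℝ) 1)) :=
  ⟨qfm μ, measurable_qfm μ, qf_ae_eq μ⟩

instance : IsProbabilityMeasure (volume.restrict (Ioo (0:ℝ) 1)) :=
  ⟨by simp [Real.volume_Ioo]⟩

lemma map_qf (hsupp : μ (Set.Iio 0) = 0) :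
    Measure.map (qf μ) (volume.restrict (Ioo (0:ℝ) 1)) = μ := by
  rw [Measure.map_congr (qf_ae_eq μ)]
  haveI : IsProbabilityMeasure (Measure.map (qfm μ) (volume.restrict (Ioo (0:ℝ) 1))) :=
    Measure.isProbabilityMeasure_map (measurable_qfm μ).aemeasurable
  refine Measure.ext_of_Iic _ _ (fun x => ?_)
  rw [Measure.map_apply (measurable_qfm μ) measurableSet_Iic,
    Measure.restrict_apply (measurable_qfm μ measurableSet_Iic)]
  rcases le_or_gt 0 x with hx | hx
  · have hset : qfm μ ⁻¹' Iic x ∩ Ioo (0:ℝ) 1 = Ioo (0:ℝ) 1 ∩ Iic (cdf μ x) := by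
      ext u
      constructor
      · rintro ⟨hle, hu⟩
        rw [mem_preimage, mem_Iic, qfm, if_pos hu, qf_le_iff μ hu.2] at hle
        exact ⟨hu, hle.2⟩
      · rintro ⟨hu, hle⟩
        refine ⟨?_, hu⟩
        rw [mem_preimage, mem_Iic, qfm, if_pos hu, qf_le_iff μ hu.2]
        exact ⟨hx, hle⟩
    rw [hset]
    have h1 : volume (Ioo (0:ℝ) 1 ∩ Iic (cdf μ x)) = ENNReal.ofReal (cdf μ x) := by
      apply le_antisymm
      · have hIoc : volume (Ioc (0:ℝ) (cdf μ x)) = ENNReal.ofReal (cdf μ x) := by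
          rw [Real.volume_Ioc, sub_zero]
        exact le_trans (measure_mono fun u hu => mem_Ioc.mpr ⟨hu.1.1, hu.2⟩) hIoc.le
      · have hIoo : volume (Ioo (0:ℝ) (cdf μ x)) = ENNReal.ofReal (cdf μ x) := by
          rw [Real.volume_Ioo, sub_zero]
        rw [← hIoo]
        exact measure_mono fun u hu => ⟨⟨hu.1, lt_of_lt_of_le hu.2 (cdf_le_one μ x)⟩, hu.2.le⟩
    rw [h1, ofReal_cdf]
  · have hset : qfm μ ⁻¹' Iic x ∩ Ioo (0:ℝ) 1 = ∅ := by
      ext u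
      simp only [mem_inter_iff, mem_preimage, mem_Iic, mem_empty_iff_false, iff_false, not_and]
      intro hle hu
      rw [qfm, if_pos hu] at hle
      exact absurd (lt_of_le_of_lt (le_trans (qf_mem μ hu.2).1 hle) hx) (lt_irrefl 0)
    rw [hset]
    simp only [measure_empty]
    symm
    exact le_antisymm (le_trans (measure_mono (Iic_subset_Iio.mpr hx)) hsupp.le) (zero_le)

lemma meas_step (μ : Measure ℝ) (f : BoundedContinuousFunction ℝ ℝ) (N : ℕ) :
    Measurable (fun u : ℝ => f (atomU μ N (⌊(N:ℝ) * u⌋₊ + 1))) := by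
  have h1 : Measurable fun u : ℝ => ⌊(N:ℝ)*u⌋₊ :=
    Nat.measurable_floor.comp (measurable_const.mul measurable_id)
  exact (measurable_from_nat (f := fun n : ℕ => f (atomU μ N (n+1)))).comp h1

lemma hfloor {N : ℕ} (hN : 0 < N) (i : ℕ) :
    ∀ u ∈ Set.Ico ((i:ℝ)/N) (((i:ℝ)+1)/N), ⌊(N:ℝ)*u⌋₊ = i := by
  have hN' : (0:ℝ) < N := Nat.cast_pos.mpr hN
  intro u hu
  have h1 := hu.1; have h2 := hu.2
  rw [div_le_iff₀ hN'] at h1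
  rw [lt_div_iff₀ hN'] at h2
  have hiu : (i:ℝ) ≤ (N:ℝ)*u := by nlinarith
  have hui : (N:ℝ)*u < (i:ℝ)+1 := by nlinarith
  have h0 : 0 ≤ (N:ℝ)*u := le_trans (by positivity) hiu
  rw [Nat.floor_eq_iff h0]
  exact ⟨hiu, hui⟩

lemma Uquant_integral (μ : Measure ℝ) (f : BoundedContinuousFunction ℝ ℝ) {N : ℕ} (hN : 0 < N) :
    ∫ x, f x ∂(Uquant μ N) = ∫ u in Set.Ioo (0:ℝ) 1, f (atomU μ N (⌊(N:ℝ) * u⌋₊ + 1)) := by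
  have hN' : (0:ℝ) < N := Nat.cast_pos.mpr hN
  have hL : ∫ x, f x ∂(Uquant μ N) = (N:ℝ)⁻¹ * ∑ i : Fin N, f (atomU μ N (i.1+1)) := by
    rw [Uquant, emp, integral_smul_measure, integral_finset_sum_measure (fun i _ => f.integrable _)]
    simp [integral_dirac, ENNReal.toReal_inv, smul_eq_mul]
  have hcover : Set.Ico (0:ℝ) 1 = ⋃ i ∈ Finset.range N, Set.Ico ((i:ℝ)/N) (((i:ℝ)+1)/N) := by
    ext u
    simp only [Set.mem_Ico, Set.mem_iUnion, Finset.mem_range, exists_prop]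
    constructor
    · rintro ⟨h0, h1⟩
      have h0N : 0 ≤ (N:ℝ)*u := by positivity
      refine ⟨⌊(N:ℝ)*u⌋₊, ?_, ?_, ?_⟩
      · rw [← Nat.cast_lt (α := ℝ)]
        calc (⌊(N:ℝ)*u⌋₊ : ℝ) ≤ (N:ℝ)*u := Nat.floor_le h0N
          _ < N := by nlinarith
      · rw [div_le_iff₀ hN']
        calc (⌊(N:ℝ)*u⌋₊ : ℝ) ≤ (N:ℝ)*u := Nat.floor_le h0N
          _ = u * N := by ring
      · rw [lt_div_iff₀ hN']
        calc u * N = (N:ℝ)*u := by ring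
          _ < ⌊(N:ℝ)*u⌋₊ + 1 := Nat.lt_floor_add_one _
    · rintro ⟨i, hiN, hi1, hi2⟩
      refine ⟨le_trans (by positivity) hi1, lt_of_lt_of_le hi2 ?_⟩
      rw [div_le_one hN']
      have : (i:ℝ) + 1 ≤ N := by exact_mod_cast Nat.succ_le_of_lt hiN
      exact this
  have hdisj : (↑(Finset.range N) : Set ℕ).Pairwise
      (Function.onFun Disjoint fun i : ℕ => Set.Ico ((i:ℝ)/N) (((i:ℝ)+1)/N)) := by
    have key : ∀ i j : ℕ, i < j →
        Disjoint (Set.Ico ((i:ℝ)/N) (((i:ℝ)+1)/N)) (Set.Ico ((j:ℝ)/N) (((j:ℝ)+1)/N)) := by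
      intro i j hij
      rw [Set.Ico_disjoint_Ico]
      have h1 : (i:ℝ)+1 ≤ j := by exact_mod_cast hij
      calc min (((i:ℝ)+1)/N) (((j:ℝ)+1)/N) ≤ ((i:ℝ)+1)/N := min_le_left _ _
        _ ≤ (j:ℝ)/N := by gcongr
        _ ≤ max ((i:ℝ)/N) ((j:ℝ)/N) := le_max_right _ _
    intro i _ j _ hij
    rcases lt_or_gt_of_ne hij with h | h
    · exact key i j h
    · exact (key j i h).symm
  have hInt : ∀ i ∈ Finset.range N,
      IntegrableOn (fun u : ℝ => f (atomU μ N (⌊(N:ℝ)*u⌋₊ + 1))) (Set.Ico ((i:ℝ)/N) (((i:ℝ)+1)/N)) volume := by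
    intro i _
    refine Integrable.mono' (integrable_const ‖f‖) ((meas_step μ f N).aestronglyMeasurable) ?_
    exact Eventually.of_forall fun u => f.norm_coe_le_norm _
  have hpiece : ∀ i ∈ Finset.range N,
      ∫ u in Set.Ico ((i:ℝ)/N) (((i:ℝ)+1)/N), f (atomU μ N (⌊(N:ℝ)*u⌋₊+1))
        = (N:ℝ)⁻¹ * f (atomU μ N (i+1)) := by
    intro i _
    rw [setIntegral_congr_fun measurableSet_Ico
      (fun u hu => by rw [hfloor hN i u hu] : EqOn _ (fun _ => f (atomU μ N (i+1))) _)]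
    rw [setIntegral_const, measureReal_def, Real.volume_Ico]
    have h2 : ((i:ℝ)+1)/N - (i:ℝ)/N = (N:ℝ)⁻¹ := by field_simp; ring
    rw [h2, ENNReal.toReal_ofReal (by positivity), smul_eq_mul]
  rw [hL, setIntegral_congr_set Ioo_ae_eq_Ico, hcover,
    integral_biUnion_finset _ (fun i _ => measurableSet_Ico) hdisj hInt,
    Finset.sum_congr rfl hpiece, ← Finset.mul_sum, Fin.sum_univ_eq_sum_range (fun i => f (atomU μ N (i+1))) N]

lemma tendsto_atom {u b : ℝ} (hu0 : 0 < u) (hub : u < b) (hb : b < 1)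
    (hcont : ContinuousAt (fun v => qf μ (min v b)) u) :
    Tendsto (fun N : ℕ => atomU μ N (⌊(N:ℝ) * u⌋₊ + 1)) atTop (𝓝 (qf μ u)) := by
  set Q : ℝ → ℝ := fun v => qf μ (min v b) with hQ
  have hQmono : Monotone Q := fun v w hvw =>
    qf_mono μ (min_le_min_right b hvw) (lt_of_le_of_lt (min_le_right _ _) hb)
  have hQu : Q u = qf μ u := by rw [hQ]; simp [min_eq_left hub.le]
  set l : ℕ → ℝ := fun N => (⌊(N:ℝ)*u⌋₊ : ℝ)/N with hl
  set r : ℕ → ℝ := fun N => ((⌊(N:ℝ)*u⌋₊ : ℝ)+1)/N with hr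
  have hu0' : ∀ N : ℕ, 0 ≤ (N:ℝ)*u := fun N => by positivity
  have hlu : ∀ {N : ℕ}, 0 < N → l N ≤ u := by
    intro N hN
    have hN' : (0:ℝ) < N := Nat.cast_pos.mpr hN
    rw [hl, div_le_iff₀ hN']
    calc (⌊(N:ℝ)*u⌋₊ : ℝ) ≤ (N:ℝ)*u := Nat.floor_le (hu0' N)
      _ = u * N := by ring
  have hur : ∀ {N : ℕ}, 0 < N → u < r N := by
    intro N hN
    have hN' : (0:ℝ) < N := Nat.cast_pos.mpr hN
    rw [hr, lt_div_iff₀ hN']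
    calc u * N = (N:ℝ)*u := by ring
      _ < ⌊(N:ℝ)*u⌋₊ + 1 := Nat.lt_floor_add_one _
  have hrl : ∀ {N : ℕ}, 0 < N → r N - l N = 1/(N:ℝ) := by
    intro N hN
    have hN' : ((N:ℝ)) ≠ 0 := ne_of_gt (Nat.cast_pos.mpr hN)
    rw [hr, hl]; field_simp; ring
  have h1N : Tendsto (fun N : ℕ => 1/(N:ℝ)) atTop (𝓝 0) := tendsto_one_div_atTop_nhds_zero_nat
  have hltend : Tendsto l atTop (𝓝 u) := by
    apply tendsto_of_tendsto_of_tendsto_of_le_of_le'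
      (g := fun N : ℕ => u - 1/(N:ℝ)) (h := fun _ : ℕ => u)
      (by simpa using (tendsto_const_nhds (x := u)).sub h1N) tendsto_const_nhds
    · filter_upwards [eventually_gt_atTop 0] with N hN
      have := hur hN
      have := hrl hN
      linarith
    · filter_upwards [eventually_gt_atTop 0] with N hN
      exact hlu hN
  have hrtend : Tendsto r atTop (𝓝 u) := by
    apply tendsto_of_tendsto_of_tendsto_of_le_of_le'
      (g := fun _ : ℕ => u) (h := fun N : ℕ => u + 1/(N:ℝ))
      tendsto_const_nhds (by simpa using (tendsto_const_nhds (x := u)).add h1N)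
    · filter_upwards [eventually_gt_atTop 0] with N hN
      exact (hur hN).le
    · filter_upwards [eventually_gt_atTop 0] with N hN
      have := hlu hN
      have := hrl hN
      linarith
  have hev : ∀ᶠ N : ℕ in atTop, r N < b := hrtend.eventually (eventually_lt_nhds hub)
  have hval : ∀ᶠ N : ℕ in atTop,
      Q (l N) ≤ atomU μ N (⌊(N:ℝ)*u⌋₊ + 1) ∧ atomU μ N (⌊(N:ℝ)*u⌋₊ + 1) ≤ Q (r N) := by
    filter_upwards [eventually_gt_atTop 0, hev] with N hN hrb
    have hN' : (0:ℝ) < N := Nat.cast_pos.mpr hN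
    have hlr : l N ≤ r N := le_trans (hlu hN) (hur hN).le
    have hatom : atomU μ N (⌊(N:ℝ)*u⌋₊ + 1) = (N:ℝ) * ∫ v in l N..r N, Q v := by
      rw [atomU]
      have e1 : ((((⌊(N:ℝ)*u⌋₊ + 1 : ℕ)):ℝ) - 1)/N = l N := by push_cast; rw [hl]; ring
      have e2 : (((⌊(N:ℝ)*u⌋₊ + 1 : ℕ)):ℝ)/N = r N := by push_cast; rw [hr]
      rw [e1, e2]
      congr 1
      apply intervalIntegral.integral_congr
      intro v hv
      rw [uIcc_of_le hlr] at hv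
      have : v ≤ b := le_trans hv.2 hrb.le
      rw [hQ]; simp [min_eq_left this]
    have hQint : IntervalIntegrable Q volume (l N) (r N) :=
      (hQmono.monotoneOn _).intervalIntegrable
    have hlow : ∫ v in l N..r N, Q (l N) ≤ ∫ v in l N..r N, Q v := by
      apply intervalIntegral.integral_mono_on hlr intervalIntegrable_const hQint
      intro x hx; exact hQmono hx.1
    have hhigh : ∫ v in l N..r N, Q v ≤ ∫ v in l N..r N, Q (r N) := by
      apply intervalIntegral.integral_mono_on hlr hQint intervalIntegrable_const
      intro x hx; exact hQmono hx.2
    rw [intervalIntegral.integral_const, smul_eq_mul, hrl hN] at hlow hhigh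
    constructor
    · rw [hatom]
      calc Q (l N) = (N:ℝ) * (1/(N:ℝ) * Q (l N)) := by field_simp
        _ ≤ _ := by
          apply mul_le_mul_of_nonneg_left hlow hN'.le
    · rw [hatom]
      calc (N:ℝ) * ∫ v in l N..r N, Q v ≤ (N:ℝ) * (1/(N:ℝ) * Q (r N)) :=
          mul_le_mul_of_nonneg_left hhigh hN'.le
        _ = Q (r N) := by field_simp
  have hQl : Tendsto (fun N : ℕ => Q (l N)) atTop (𝓝 (qf μ u)) := by
    rw [← hQu]; exact hcont.tendsto.comp hltend
  have hQr : Tendsto (fun N : ℕ => Q (r N)) atTop (𝓝 (qf μ u)) := by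
    rw [← hQu]; exact hcont.tendsto.comp hrtend
  exact tendsto_of_tendsto_of_tendsto_of_le_of_le' hQl hQr
    (hval.mono fun N h => h.1) (hval.mono fun N h => h.2)

end Aux


/-- the 𝒰-quantizations `𝒰^{(N)}(μ)` converge weakly to `μ` as `N → ∞`. -/
theorem stmt2 (μ : Measure ℝ) [IsProbabilityMeasure μ]
    (hsupp : μ (Set.Iio 0) = 0) (hmom : Integrable (fun x => x) μ) :
    ∀ f : BoundedContinuousFunction ℝ ℝ,
      Tendsto (fun N => ∫ x, f x ∂(Uquant μ N)) atTop (𝓝 (∫ x, f x ∂μ)) := by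
  intro f
  -- the candidate limit, rewritten via the quantile transform
  have hμint : ∫ u in Set.Ioo (0:ℝ) 1, f (qf μ u) = ∫ x, f x ∂μ := by
    conv_rhs => rw [← map_qf μ hsupp]
    rw [integral_map (aemeasurable_qf μ) f.continuous.aestronglyMeasurable]
  -- a.e. pointwise convergence of the step approximations
  have hB : (⋃ n : ℕ, {x : ℝ |
      ¬ContinuousAt (fun v => qf μ (min v (1 - 1/((n:ℝ)+1)))) x}).Countable := by
    refine Set.countable_iUnion fun n => ?_
    have hbn : (1:ℝ) - 1/((n:ℝ)+1) < 1 := by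
      have : (0:ℝ) < 1/((n:ℝ)+1) := by positivity
      linarith
    have hmono : Monotone (fun v => qf μ (min v (1 - 1/((n:ℝ)+1)))) := fun v w hvw =>
      qf_mono μ (min_le_min_right _ hvw) (lt_of_le_of_lt (min_le_right _ _) hbn)
    exact hmono.countable_not_continuousAt
  have hnotB : ∀ᵐ u ∂(volume.restrict (Set.Ioo (0:ℝ) 1)), u ∉ ⋃ n : ℕ, {x : ℝ |
      ¬ContinuousAt (fun v => qf μ (min v (1 - 1/((n:ℝ)+1)))) x} := by
    exact ae_restrict_of_ae (hB.ae_notMem volume)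
  have hae_tendsto : ∀ᵐ u ∂(volume.restrict (Set.Ioo (0:ℝ) 1)),
      Tendsto (fun N : ℕ => f (atomU μ N (⌊(N:ℝ)*u⌋₊+1))) atTop (𝓝 (f (qf μ u))) := by
    filter_upwards [ae_restrict_mem measurableSet_Ioo, hnotB] with u hu hBu
    obtain ⟨n, hn⟩ := exists_nat_one_div_lt (show (0:ℝ) < 1 - u by linarith [hu.2])
    have hub : u < 1 - 1/((n:ℝ)+1) := by linarith
    have hb1 : (1:ℝ) - 1/((n:ℝ)+1) < 1 := by
      have : (0:ℝ) < 1/((n:ℝ)+1) := by positivity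
      linarith
    have hcont : ContinuousAt (fun v => qf μ (min v (1 - 1/((n:ℝ)+1)))) u := by
      by_contra h
      exact hBu (Set.mem_iUnion.mpr ⟨n, h⟩)
    exact (f.continuous.tendsto _).comp (tendsto_atom μ hu.1 hub hb1 hcont)
  have key := tendsto_integral_of_dominated_convergence
    (μ := volume.restrict (Set.Ioo (0:ℝ) 1))
    (F := fun (N : ℕ) (u : ℝ) => f (atomU μ N (⌊(N:ℝ)*u⌋₊+1)))
    (f := fun u => f (qf μ u)) (fun _ => ‖f‖)
    (fun N => (meas_step μ f N).aestronglyMeasurable)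
    (integrable_const _)
    (fun N => Eventually.of_forall fun u => f.norm_coe_le_norm _)
    hae_tendsto
  rw [← hμint]
  refine Tendsto.congr' ?_ key
  filter_upwards [eventually_gt_atTop 0] with N hN
  exact (Uquant_integral μ f hN).symm
end

section
/- For probability measures μ, ν on R with finite first moments, the 1-Wasserstein distance equals the L^1 distance of quantile functions: W(μ,ν) = ∫_0^1 |F_μ^{-1}(u) − F_ν^{-1}(u)| du. -/
open MeasureTheory Filter Topology
open scoped ENNReal BigOperators

/-- 1-Wasserstein distance via couplings. -/
noncomputable def Wdist (μ ν : Measure ℝ) : ℝ≥0∞ :=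
  ⨅ (π : Measure (ℝ × ℝ)) (_ : π.map Prod.fst = μ ∧ π.map Prod.snd = ν),
    ∫⁻ p, ENNReal.ofReal |p.1 - p.2| ∂π

/-- Generalized inverse `F_μ⁻¹(u) = inf {x : F_μ(x) ≥ u}` of the cdf of a
probability measure on `ℝ`. -/
noncomputable def qfR (μ : Measure ℝ) (u : ℝ) : ℝ :=
  sInf {x : ℝ | u ≤ ProbabilityTheory.cdf μ x}

section QfAux
set_option linter.unusedSectionVars false
open Set ProbabilityTheory
variable (μ : Measure ℝ) [IsProbabilityMeasure μ]

lemma qfR_nonempty {u : ℝ} (h1 : u < 1) : {x : ℝ | u ≤ cdf μ x}.Nonempty := by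
  obtain ⟨x, hx⟩ := ((tendsto_cdf_atTop μ).eventually (eventually_ge_nhds h1)).exists
  exact ⟨x, hx⟩

lemma qfR_bddBelow {u : ℝ} (h0 : 0 < u) : BddBelow {x : ℝ | u ≤ cdf μ x} := by
  obtain ⟨x₀, hx₀⟩ := ((tendsto_cdf_atBot μ).eventually (eventually_lt_nhds h0)).exists
  refine ⟨x₀, fun x hx => ?_⟩
  by_contra hlt
  exact absurd (hx.trans ((cdf μ).mono (le_of_lt (not_le.1 hlt)))) (not_le.2 hx₀)

lemma qfR_le_iff {u : ℝ} (h0 : 0 < u) (h1 : u < 1) (x : ℝ) :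
    qfR μ u ≤ x ↔ u ≤ cdf μ x := by
  have hne := qfR_nonempty μ h1
  have hbdd := qfR_bddBelow μ h0
  have hmem : u ≤ cdf μ (qfR μ u) := by
    have key : ∀ᶠ y in 𝓝[>] (qfR μ u), u ≤ cdf μ y := by
      refine eventually_nhdsWithin_of_forall fun y hy => ?_
      obtain ⟨z, hzS, hzy⟩ := exists_lt_of_csInf_lt hne hy
      exact hzS.trans ((cdf μ).mono hzy.le)
    have hc : Tendsto (cdf μ) (𝓝[>] (qfR μ u)) (𝓝 (cdf μ (qfR μ u))) :=
      ((cdf μ).right_continuous _).mono Ioi_subset_Ici_self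
    exact ge_of_tendsto hc key
  constructor
  · intro hle; exact hmem.trans ((cdf μ).mono hle)
  · intro hx; exact csInf_le hbdd hx

lemma qfR_monoOn : MonotoneOn (qfR μ) (Ioo (0:ℝ) 1) := by
  intro u hu v hv huv
  exact csInf_le_csInf (qfR_bddBelow μ hu.1) (qfR_nonempty μ hv.2)
    (fun x hx => huv.trans hx)


lemma volume_between {a b : ℝ} {s : Set ℝ} (h1 : Ioo a b ⊆ s) (h2 : s ⊆ Ioc a b) :
    volume s = ENNReal.ofReal (b - a) := by
  refine le_antisymm ?_ ?_
  · calc volume s ≤ volume (Ioc a b) := measure_mono h2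
      _ = ENNReal.ofReal (b - a) := Real.volume_Ioc
  · calc ENNReal.ofReal (b - a) = volume (Ioo a b) := Real.volume_Ioo.symm
      _ ≤ volume s := measure_mono h1

lemma map_qfR (μ : Measure ℝ) [IsProbabilityMeasure μ] :
    (volume.restrict (Ioo (0:ℝ) 1)).map (qfR μ) = μ := by
  have hmeas : AEMeasurable (qfR μ) (volume.restrict (Ioo (0:ℝ) 1)) :=
    aemeasurable_restrict_of_monotoneOn measurableSet_Ioo (qfR_monoOn μ)
  haveI : IsProbabilityMeasure (volume.restrict (Ioo (0:ℝ) 1)) := ⟨by simp⟩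
  haveI : IsProbabilityMeasure ((volume.restrict (Ioo (0:ℝ) 1)).map (qfR μ)) :=
    Measure.isProbabilityMeasure_map hmeas
  refine Measure.ext_of_Iic _ _ fun x => ?_
  rw [Measure.map_apply_of_aemeasurable hmeas measurableSet_Iic, ← ofReal_cdf μ x,
      Measure.restrict_apply' measurableSet_Ioo]
  rw [show ENNReal.ofReal (cdf μ x) = ENNReal.ofReal (cdf μ x - 0) by rw [sub_zero]]
  apply volume_between
  · intro u hu
    have hu1 : u < 1 := lt_of_lt_of_le hu.2 (cdf_le_one μ x)
    exact ⟨by simpa using (qfR_le_iff μ hu.1 hu1 x).2 hu.2.le, hu.1, hu1⟩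
  · rintro u ⟨hux, hu0, hu1⟩
    simp only [mem_preimage, mem_Iic] at hux
    exact ⟨hu0, (qfR_le_iff μ hu0 hu1 x).1 hux⟩

lemma xorSet_eq {a b : ℝ} (hab : a ≤ b) :
    {t : ℝ | Xor' (a ≤ t) (b ≤ t)} = Ico a b := by
  ext t
  constructor
  · rintro (⟨h1, h2⟩ | ⟨h1, h2⟩)
    · exact ⟨h1, not_le.1 h2⟩
    · exact absurd (hab.trans h1) h2
  · rintro ⟨h1, h2⟩
    exact Or.inl ⟨h1, not_le.2 h2⟩

lemma volume_xorSet (a b : ℝ) :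
    volume {t : ℝ | Xor' (a ≤ t) (b ≤ t)} = ENNReal.ofReal |a - b| := by
  rcases le_total a b with hab | hab
  · rw [xorSet_eq hab, Real.volume_Ico, abs_sub_comm, abs_of_nonneg (sub_nonneg.2 hab)]
  · have : {t : ℝ | Xor' (a ≤ t) (b ≤ t)} = {t : ℝ | Xor' (b ≤ t) (a ≤ t)} := by
      ext t; exact iff_of_eq (xor_comm _ _)
    rw [this, xorSet_eq hab, Real.volume_Ico, abs_of_nonneg (sub_nonneg.2 hab)]

lemma restrict_xorSet {a b : ℝ} (ha0 : 0 ≤ a) (ha1 : a ≤ 1) (hb0 : 0 ≤ b) (hb1 : b ≤ 1) :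
    (volume.restrict (Ioo (0:ℝ) 1)) {u : ℝ | Xor' (u ≤ a) (u ≤ b)} = ENNReal.ofReal |a - b| := by
  have key : ∀ c d : ℝ, 0 ≤ c → d ≤ 1 → c ≤ d →
      (volume.restrict (Ioo (0:ℝ) 1)) {u : ℝ | Xor' (u ≤ c) (u ≤ d)} = ENNReal.ofReal (d - c) := by
    intro c d hc0 hd1 hcd
    rw [Measure.restrict_apply' measurableSet_Ioo]
    apply volume_between
    · rintro u ⟨huc, hud⟩
      refine ⟨Or.inr ⟨hud.le, not_le.2 huc⟩, hc0.trans_lt huc, hud.trans_le hd1⟩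
    · rintro u ⟨(⟨h1, h2⟩ | ⟨h1, h2⟩), hu0, hu1⟩
      · exact absurd (h1.trans hcd) h2
      · exact ⟨not_le.1 h2, h1⟩
  rcases le_total a b with hab | hab
  · rw [abs_sub_comm, abs_of_nonneg (sub_nonneg.2 hab)]
    exact key a b ha0 hb1 hab
  · rw [abs_of_nonneg (sub_nonneg.2 hab)]
    have hset : {u : ℝ | Xor' (u ≤ a) (u ≤ b)} = {u : ℝ | Xor' (u ≤ b) (u ≤ a)} := by
      ext u; exact iff_of_eq (xor_comm _ _)
    rw [hset]
    exact key b a hb0 ha1 hab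

lemma measurableSet_xor {α : Type*} [MeasurableSpace α] {P Q : α → Prop}
    (hP : MeasurableSet {x | P x}) (hQ : MeasurableSet {x | Q x}) :
    MeasurableSet {x | Xor' (P x) (Q x)} := by
  have h : {x | Xor' (P x) (Q x)} = ({x | P x} \ {x | Q x}) ∪ ({x | Q x} \ {x | P x}) := by
    ext x
    simp only [Set.mem_setOf_eq, Set.mem_union, Set.mem_diff, Xor']
    exact Iff.rfl
  rw [h]
  exact (hP.diff hQ).union (hQ.diff hP)

lemma key_eq (μ ν : Measure ℝ) [IsProbabilityMeasure μ] [IsProbabilityMeasure ν] :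
    ∫⁻ t, ENNReal.ofReal |cdf μ t - cdf ν t| =
      ∫⁻ u in Ioo (0:ℝ) 1, ENNReal.ofReal |qfR μ u - qfR ν u| := by
  set ρ := volume.restrict (Ioo (0:ℝ) 1) with hρ
  have hcμ : Measurable (cdf μ) := (cdf μ).mono.measurable
  have hcν : Measurable (cdf ν) := (cdf ν).mono.measurable
  set E : Set (ℝ × ℝ) := {p | Xor' (p.2 ≤ cdf μ p.1) (p.2 ≤ cdf ν p.1)} with hE
  have hEm : MeasurableSet E :=
    measurableSet_xor (measurableSet_le measurable_snd (hcμ.comp measurable_fst))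
      (measurableSet_le measurable_snd (hcν.comp measurable_fst))
  have h1 : (volume.prod ρ) E = ∫⁻ t, ENNReal.ofReal |cdf μ t - cdf ν t| := by
    rw [Measure.prod_apply hEm]
    refine lintegral_congr fun t => ?_
    have hpre : Prod.mk t ⁻¹' E = {u : ℝ | Xor' (u ≤ cdf μ t) (u ≤ cdf ν t)} := rfl
    rw [hpre]
    exact restrict_xorSet (cdf_nonneg μ t) (cdf_le_one μ t) (cdf_nonneg ν t) (cdf_le_one ν t)
  have h2 : (volume.prod ρ) E = ∫⁻ u, ENNReal.ofReal |qfR μ u - qfR ν u| ∂ρ := by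
    rw [Measure.prod_apply_symm hEm]
    refine lintegral_congr_ae ((ae_restrict_mem measurableSet_Ioo).mono fun u hu => ?_)
    have hpre : ((fun t => (t, u)) ⁻¹' E) = {t : ℝ | Xor' (u ≤ cdf μ t) (u ≤ cdf ν t)} := rfl
    have hset : ((fun t => (t, u)) ⁻¹' E) = {t : ℝ | Xor' (qfR μ u ≤ t) (qfR ν u ≤ t)} := by
      rw [hpre]
      ext t
      simp only [Set.mem_setOf_eq]
      constructor <;> rintro (⟨ha, hb⟩ | ⟨ha, hb⟩)
      · exact Or.inl ⟨(qfR_le_iff μ hu.1 hu.2 t).2 ha, fun h => hb ((qfR_le_iff ν hu.1 hu.2 t).1 h)⟩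
      · exact Or.inr ⟨(qfR_le_iff ν hu.1 hu.2 t).2 ha, fun h => hb ((qfR_le_iff μ hu.1 hu.2 t).1 h)⟩
      · exact Or.inl ⟨(qfR_le_iff μ hu.1 hu.2 t).1 ha, fun h => hb ((qfR_le_iff ν hu.1 hu.2 t).2 h)⟩
      · exact Or.inr ⟨(qfR_le_iff ν hu.1 hu.2 t).1 ha, fun h => hb ((qfR_le_iff μ hu.1 hu.2 t).2 h)⟩
    show volume ((fun t => (t, u)) ⁻¹' E) = _
    rw [hset]
    exact volume_xorSet _ _
  rw [← h1, h2]

lemma coupling_lower (μ ν : Measure ℝ) [IsProbabilityMeasure μ] [IsProbabilityMeasure ν]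
    (π : Measure (ℝ × ℝ)) (h1 : π.map Prod.fst = μ) (h2 : π.map Prod.snd = ν) :
    ∫⁻ t, ENNReal.ofReal |cdf μ t - cdf ν t| ≤ ∫⁻ p, ENNReal.ofReal |p.1 - p.2| ∂π := by
  haveI : IsFiniteMeasure π := by
    constructor
    have : π.map Prod.fst Set.univ = π Set.univ := by
      rw [Measure.map_apply measurable_fst MeasurableSet.univ, Set.preimage_univ]
    rw [← this, h1]
    exact (measure_lt_top μ _)
  set C : Set ((ℝ × ℝ) × ℝ) := {q | Xor' (q.1.1 ≤ q.2) (q.1.2 ≤ q.2)} with hC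
  have hCm : MeasurableSet C :=
    measurableSet_xor (measurableSet_le (measurable_fst.comp measurable_fst) measurable_snd)
      (measurableSet_le (measurable_snd.comp measurable_fst) measurable_snd)
  have hA : (π.prod volume) C = ∫⁻ p, ENNReal.ofReal |p.1 - p.2| ∂π := by
    rw [Measure.prod_apply hCm]
    refine lintegral_congr fun p => ?_
    show volume (Prod.mk p ⁻¹' C) = _
    have : Prod.mk p ⁻¹' C = {t : ℝ | Xor' (p.1 ≤ t) (p.2 ≤ t)} := rfl
    rw [this]
    exact volume_xorSet _ _
  have hB : (π.prod volume) C = ∫⁻ t, π {p : ℝ × ℝ | Xor' (p.1 ≤ t) (p.2 ≤ t)} := by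
    rw [Measure.prod_apply_symm hCm]
    exact lintegral_congr fun t => rfl
  rw [← hA, hB]
  refine lintegral_mono fun t => ?_
  have hπA : π {p : ℝ × ℝ | p.1 ≤ t} = ENNReal.ofReal (cdf μ t) := by
    rw [ofReal_cdf, ← h1, Measure.map_apply measurable_fst measurableSet_Iic]
    rfl
  have hπB : π {p : ℝ × ℝ | p.2 ≤ t} = ENNReal.ofReal (cdf ν t) := by
    rw [ofReal_cdf, ← h2, Measure.map_apply measurable_snd measurableSet_Iic]
    rfl
  have key : ∀ A B : Set (ℝ × ℝ), A \ B ⊆ {p : ℝ × ℝ | Xor' (p.1 ≤ t) (p.2 ≤ t)} →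
      π A - π B ≤ π {p : ℝ × ℝ | Xor' (p.1 ≤ t) (p.2 ≤ t)} := by
    intro A B hsub
    refine le_trans ?_ (measure_mono hsub)
    rw [tsub_le_iff_right]
    calc π A ≤ π ((A \ B) ∪ B) := measure_mono (by intro a ha; by_cases h : a ∈ B
                                                   · exact Or.inr h
                                                   · exact Or.inl ⟨ha, h⟩)
      _ ≤ π (A \ B) + π B := measure_union_le _ _
  rcases le_total (cdf ν t) (cdf μ t) with hle | hle
  · rw [abs_of_nonneg (sub_nonneg.2 hle), ENNReal.ofReal_sub _ (cdf_nonneg ν t), ← hπA, ← hπB]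
    exact key _ _ (fun p hp => Or.inl ⟨hp.1, hp.2⟩)
  · rw [abs_of_nonpos (sub_nonpos.2 hle), neg_sub, ENNReal.ofReal_sub _ (cdf_nonneg μ t),
      ← hπA, ← hπB]
    exact key _ _ (fun p hp => Or.inr ⟨hp.1, hp.2⟩)

lemma quantile_coupling (μ ν : Measure ℝ) [IsProbabilityMeasure μ] [IsProbabilityMeasure ν] :
    ∃ π : Measure (ℝ × ℝ), (π.map Prod.fst = μ ∧ π.map Prod.snd = ν) ∧
      ∫⁻ p, ENNReal.ofReal |p.1 - p.2| ∂π =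
        ∫⁻ u in Ioo (0:ℝ) 1, ENNReal.ofReal |qfR μ u - qfR ν u| := by
  set ρ := volume.restrict (Ioo (0:ℝ) 1) with hρ
  have hμm : AEMeasurable (qfR μ) ρ :=
    aemeasurable_restrict_of_monotoneOn measurableSet_Ioo (qfR_monoOn μ)
  have hνm : AEMeasurable (qfR ν) ρ :=
    aemeasurable_restrict_of_monotoneOn measurableSet_Ioo (qfR_monoOn ν)
  have hpair : AEMeasurable (fun u => (qfR μ u, qfR ν u)) ρ := hμm.prodMk hνm
  refine ⟨ρ.map (fun u => (qfR μ u, qfR ν u)), ⟨?_, ?_⟩, ?_⟩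
  · rw [AEMeasurable.map_map_of_aemeasurable measurable_fst.aemeasurable hpair]
    exact map_qfR μ
  · rw [AEMeasurable.map_map_of_aemeasurable measurable_snd.aemeasurable hpair]
    exact map_qfR ν
  · rw [lintegral_map' (f := fun p : ℝ × ℝ => ENNReal.ofReal |p.1 - p.2|) ((measurable_fst.sub measurable_snd).abs.ennreal_ofReal).aemeasurable hpair]

lemma L_lt_top (μ ν : Measure ℝ) [IsProbabilityMeasure μ] [IsProbabilityMeasure ν]
    (hμ : Integrable (fun x => x) μ) (hν : Integrable (fun x => x) ν) :
    ∫⁻ u in Ioo (0:ℝ) 1, ENNReal.ofReal |qfR μ u - qfR ν u| < ∞ := by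
  rw [← key_eq]
  have hm1 : (μ.prod ν).map Prod.fst = μ := by
    rw [Measure.map_fst_prod, measure_univ, one_smul]
  have hm2 : (μ.prod ν).map Prod.snd = ν := by
    rw [Measure.map_snd_prod, measure_univ, one_smul]
  refine lt_of_le_of_lt (coupling_lower μ ν (μ.prod ν) hm1 hm2) ?_
  have hfin : ∀ (κ : Measure ℝ), Integrable (fun x => x) κ →
      ∫⁻ x, ENNReal.ofReal |x| ∂κ < ∞ := by
    intro κ hκ
    have := hκ.hasFiniteIntegral
    rw [hasFiniteIntegral_def] at this
    refine lt_of_le_of_lt (le_of_eq ?_) this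
    exact lintegral_congr fun x => (Real.enorm_eq_ofReal_abs x).symm
  calc ∫⁻ p, ENNReal.ofReal |p.1 - p.2| ∂(μ.prod ν)
      ≤ ∫⁻ p : ℝ × ℝ, (ENNReal.ofReal |p.1| + ENNReal.ofReal |p.2|) ∂(μ.prod ν) := by
        refine lintegral_mono fun p => ?_
        rw [← ENNReal.ofReal_add (abs_nonneg _) (abs_nonneg _)]
        exact ENNReal.ofReal_le_ofReal (abs_sub _ _)
    _ = (∫⁻ p : ℝ × ℝ, ENNReal.ofReal |p.1| ∂(μ.prod ν))
        + ∫⁻ p : ℝ × ℝ, ENNReal.ofReal |p.2| ∂(μ.prod ν) :=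
        lintegral_add_left (measurable_fst.abs.ennreal_ofReal) _
    _ = (∫⁻ x, ENNReal.ofReal |x| ∂μ) + ∫⁻ x, ENNReal.ofReal |x| ∂ν := by
        rw [show (∫⁻ p : ℝ × ℝ, ENNReal.ofReal |p.1| ∂(μ.prod ν)) = ∫⁻ x, ENNReal.ofReal |x| ∂μ
            from by rw [← lintegral_map measurable_abs.ennreal_ofReal measurable_fst, hm1],
          show (∫⁻ p : ℝ × ℝ, ENNReal.ofReal |p.2| ∂(μ.prod ν)) = ∫⁻ x, ENNReal.ofReal |x| ∂ν
            from by rw [← lintegral_map measurable_abs.ennreal_ofReal measurable_snd, hm2]]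
    _ < ∞ := ENNReal.add_lt_top.2 ⟨hfin μ hμ, hfin ν hν⟩

end QfAux

section Main
open Set ProbabilityTheory

/-- the 1-Wasserstein distance between probability measures on `ℝ`
with finite first moments equals the `L¹` distance of their quantile functions:
`W(μ,ν) = ∫_0^1 |F_μ⁻¹(u) − F_ν⁻¹(u)| du`. -/
theorem stmt5 (μ ν : Measure ℝ) [IsProbabilityMeasure μ] [IsProbabilityMeasure ν]
    (hμ : Integrable (fun x => x) μ) (hν : Integrable (fun x => x) ν) :
    Wdist μ ν = ENNReal.ofReal (∫ u in (0:ℝ)..1, |qfR μ u - qfR ν u|) := by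
  obtain ⟨π₁, hπ₁m, hπ₁c⟩ := quantile_coupling μ ν
  have hL := L_lt_top μ ν hμ hν
  have hW : Wdist μ ν = ∫⁻ u in Ioo (0:ℝ) 1, ENNReal.ofReal |qfR μ u - qfR ν u| := by
    refine le_antisymm ?_ ?_
    · exact (iInf₂_le π₁ hπ₁m).trans_eq hπ₁c
    · refine le_iInf fun π => le_iInf fun hπ => ?_
      exact le_of_eq_of_le (key_eq μ ν).symm (coupling_lower μ ν π hπ.1 hπ.2)
  rw [hW]
  have hmeas : AEMeasurable (fun u => |qfR μ u - qfR ν u|) (volume.restrict (Ioo (0:ℝ) 1)) := by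
    have h1 : AEMeasurable (qfR μ) (volume.restrict (Ioo (0:ℝ) 1)) :=
      aemeasurable_restrict_of_monotoneOn measurableSet_Ioo (qfR_monoOn μ)
    have h2 : AEMeasurable (qfR ν) (volume.restrict (Ioo (0:ℝ) 1)) :=
      aemeasurable_restrict_of_monotoneOn measurableSet_Ioo (qfR_monoOn ν)
    exact measurable_abs.comp_aemeasurable (h1.sub h2)
  have hint : Integrable (fun u => |qfR μ u - qfR ν u|) (volume.restrict (Ioo (0:ℝ) 1)) := by
    refine ⟨hmeas.aestronglyMeasurable, ?_⟩
    rw [hasFiniteIntegral_def]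
    refine lt_of_le_of_lt (le_of_eq (lintegral_congr fun u => ?_)) hL
    rw [Real.enorm_eq_ofReal_abs, abs_abs]
  have hIoc : volume.restrict (Ioc (0:ℝ) 1) = volume.restrict (Ioo (0:ℝ) 1) :=
    Measure.restrict_congr_set (Ioo_ae_eq_Ioc (a := (0:ℝ)) (b := 1)).symm
  rw [intervalIntegral.integral_of_le zero_le_one,
    show (∫ u in Ioc (0:ℝ) 1, |qfR μ u - qfR ν u|) = ∫ u in Ioo (0:ℝ) 1, |qfR μ u - qfR ν u|
      from by rw [hIoc]]
  rw [MeasureTheory.ofReal_integral_eq_lintegral_ofReal hint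
    (ae_of_all _ fun u => abs_nonneg _)]

end Main
end

section
/- Two discrete measures μ_1 = (1/N)∑_{j=1}^N δ_{x_j} and μ_2 = (1/N)∑_{j=1}^N δ_{y_j} on R_+ are in convex order μ_1 ⪯ μ_2 if and only if ∫(x−L)_+ dμ_1(x) ≤ ∫(x−L)_+ dμ_2(x) holds for every atom L ∈ {y_1,...,y_N} of μ_2 and the means coincide: (1/N)∑_j x_j = (1/N)∑_j y_j. -/
open MeasureTheory Filter Topology
open scoped ENNReal BigOperators

/-- Convex order for measures on `ℝ₊`. -/
def cvxOrder (μ ν : Measure ℝ) : Prop :=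
  ∀ f : ℝ → ℝ, ConvexOn ℝ (Set.Ici 0) f → Integrable f μ → Integrable f ν →
    ∫ x, f x ∂μ ≤ ∫ x, f x ∂ν

open Finset

section Aux


lemma integrable_dirac' (f : ℝ → ℝ) (a : ℝ) : Integrable f (Measure.dirac a) := by
  have h : (fun _ : ℝ => f a) =ᵐ[Measure.dirac a] f := by
    rw [Filter.EventuallyEq, MeasureTheory.ae_dirac_eq]
    exact Filter.eventually_pure.2 rfl
  exact (integrable_const (f a)).congr h

lemma integrable_emp (N : ℕ) (hN : 0 < N) (x : Fin N → ℝ) (f : ℝ → ℝ) :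
    Integrable f (emp N x) := by
  unfold emp
  refine Integrable.smul_measure ?_ (by simp [hN.ne'])
  rw [integrable_finset_sum_measure]
  exact fun i _ => integrable_dirac' f (x i)

lemma integral_emp (N : ℕ) (x : Fin N → ℝ) (f : ℝ → ℝ) :
    ∫ z, f z ∂(emp N x) = (N : ℝ)⁻¹ * ∑ i, f (x i) := by
  unfold emp
  rw [integral_smul_measure, integral_finset_sum_measure (fun i _ => integrable_dirac' f (x i))]
  simp [integral_dirac, smul_eq_mul]

lemma convexOn_call (c : ℝ) : ConvexOn ℝ (Set.Ici 0) (fun z => max (z - c) 0) := by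
  have h1 : ConvexOn ℝ (Set.Ici (0:ℝ)) (fun z => z - c) :=
    (convexOn_id (convex_Ici 0)).sub (concaveOn_const c (convex_Ici 0))
  exact h1.sup (convexOn_const 0 (convex_Ici 0))

lemma convexOn_neg_id : ConvexOn ℝ (Set.Ici (0:ℝ)) (fun z => -z) := by
  refine ⟨convex_Ici 0, fun u _ v _ a b _ _ _ => le_of_eq ?_⟩
  simp [smul_eq_mul]; ring

lemma call_cvx (a b L t c : ℝ) (ht0 : 0 ≤ t) (ht1 : t ≤ 1)
    (hL : L = (1 - t) * a + t * b) :
    max (c - L) 0 ≤ (1 - t) * max (c - a) 0 + t * max (c - b) 0 := by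
  have h1 : 0 ≤ (1 - t) * max (c - a) 0 + t * max (c - b) 0 := by
    have := le_max_right (c - a) (0:ℝ)
    have := le_max_right (c - b) (0:ℝ)
    nlinarith
  refine max_le ?_ h1
  nlinarith [le_max_left (c - a) (0:ℝ), le_max_left (c - b) (0:ℝ)]

lemma stepA (N : ℕ) (hN : 0 < N) (x y : Fin N → ℝ)
    (hx : ∀ j, 0 ≤ x j) (hy : ∀ j, 0 ≤ y j)
    (hsum : ∑ i, x i = ∑ i, y i)
    (hcall : ∀ j, ∑ i, max (x i - y j) 0 ≤ ∑ i, max (y i - y j) 0)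
    (L : ℝ) (hL : 0 ≤ L) :
    ∑ i, max (x i - L) 0 ≤ ∑ i, max (y i - L) 0 := by
  have hne : (Finset.univ : Finset (Fin N)).Nonempty := ⟨⟨0, hN⟩, Finset.mem_univ _⟩
  -- call inequality at 0 (it's an equality)
  have hcall0 : ∑ i, max (x i - 0) 0 ≤ ∑ i, max (y i - 0) 0 := by
    have e1 : ∑ i, max (x i - 0) 0 = ∑ i, x i :=
      Finset.sum_congr rfl fun i _ => by rw [sub_zero]; exact max_eq_left (hx i)
    have e2 : ∑ i, max (y i - 0) 0 = ∑ i, y i :=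
      Finset.sum_congr rfl fun i _ => by rw [sub_zero]; exact max_eq_left (hy i)
    rw [e1, e2, hsum]
  by_cases hall : ∀ j, y j ≤ L
  · -- everything collapses to 0
    obtain ⟨j0, -, hj0⟩ := Finset.exists_max_image Finset.univ y hne
    have h2 : ∑ i, max (y i - y j0) 0 = 0 :=
      Finset.sum_eq_zero fun i _ => max_eq_right (by linarith [hj0 i (Finset.mem_univ i)])
    have h3 := hcall j0
    rw [h2] at h3
    have h4 : ∀ i ∈ Finset.univ, max (x i - y j0) 0 = 0 := by
      rw [← Finset.sum_eq_zero_iff_of_nonneg (fun i _ => le_max_right _ _)]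
      exact le_antisymm h3 (Finset.sum_nonneg fun i _ => le_max_right _ _)
    have h5 : ∀ i, x i ≤ y j0 := fun i => by
      have := h4 i (Finset.mem_univ i)
      have := max_eq_right_iff.mp this
      linarith
    have h6 : ∑ i, max (x i - L) 0 = 0 :=
      Finset.sum_eq_zero fun i _ => max_eq_right (by linarith [h5 i, hall j0])
    rw [h6]
    exact Finset.sum_nonneg fun i _ => le_max_right _ _
  · push_neg at hall
    obtain ⟨j1, hj1⟩ := hall
    set B := Finset.univ.filter (fun j => L < y j) with hB
    have hBne : B.Nonempty := ⟨j1, by simp [hB, hj1]⟩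
    obtain ⟨jb, hjbB, hjbmin⟩ := Finset.exists_min_image B y hBne
    set b := y jb with hbdef
    have hLb : L < b := (Finset.mem_filter.mp hjbB).2
    have hbmin : ∀ i, L < y i → b ≤ y i := fun i hi =>
      hjbmin i (Finset.mem_filter.mpr ⟨Finset.mem_univ i, hi⟩)
    -- choose a
    obtain ⟨a, ha0, haL, hcalla, hsep⟩ :
        ∃ a, 0 ≤ a ∧ a ≤ L ∧
          (∑ i, max (x i - a) 0 ≤ ∑ i, max (y i - a) 0) ∧ ∀ i, y i ≤ L → y i ≤ a := by
      by_cases hA : ∃ j, y j ≤ L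
      · obtain ⟨j2, hj2⟩ := hA
        set A := Finset.univ.filter (fun j => y j ≤ L) with hA'
        obtain ⟨ja, hjaA, hjamax⟩ := Finset.exists_max_image A y ⟨j2, by simp [hA', hj2]⟩
        refine ⟨y ja, hy ja, (Finset.mem_filter.mp hjaA).2, hcall ja, fun i hi =>
          hjamax i (Finset.mem_filter.mpr ⟨Finset.mem_univ i, hi⟩)⟩
      · push_neg at hA
        exact ⟨0, le_refl 0, hL, hcall0, fun i hi => absurd hi (not_le.mpr (hA i))⟩
    have hab : a < b := lt_of_le_of_lt haL hLb
    set t := (L - a) / (b - a) with ht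
    have hba : b - a ≠ 0 := by linarith
    clear_value t
    have ht0 : 0 ≤ t := by rw [ht]; exact div_nonneg (by linarith) (by linarith)
    have ht1 : t ≤ 1 := by rw [ht, div_le_one (by linarith)]; linarith
    have htL : t * (b - a) = L - a := by rw [ht]; exact div_mul_cancel₀ _ hba
    have hLrep : L = (1 - t) * a + t * b := by linear_combination -htL
    have hcallb : ∑ i, max (x i - b) 0 ≤ ∑ i, max (y i - b) 0 := hcall jb
    have hsplit : ∀ i, y i ≤ a ∨ b ≤ y i := fun i => by
      by_cases h : y i ≤ L
      · exact Or.inl (hsep i h)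
      · exact Or.inr (hbmin i (not_le.mp h))
    calc ∑ i, max (x i - L) 0
        ≤ ∑ i, ((1 - t) * max (x i - a) 0 + t * max (x i - b) 0) :=
          Finset.sum_le_sum fun i _ => call_cvx a b L t (x i) ht0 ht1 hLrep
      _ = (1 - t) * ∑ i, max (x i - a) 0 + t * ∑ i, max (x i - b) 0 := by
          rw [Finset.sum_add_distrib, Finset.mul_sum, Finset.mul_sum]
      _ ≤ (1 - t) * ∑ i, max (y i - a) 0 + t * ∑ i, max (y i - b) 0 := by
          have h1 : (0:ℝ) ≤ 1 - t := by linarith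
          exact add_le_add (mul_le_mul_of_nonneg_left hcalla h1)
            (mul_le_mul_of_nonneg_left hcallb ht0)
      _ = ∑ i, ((1 - t) * max (y i - a) 0 + t * max (y i - b) 0) := by
          rw [Finset.sum_add_distrib, Finset.mul_sum, Finset.mul_sum]
      _ = ∑ i, max (y i - L) 0 := by
          refine Finset.sum_congr rfl fun i _ => ?_
          rcases hsplit i with h | h
          · rw [max_eq_right (by linarith), max_eq_right (by linarith),
              max_eq_right (by linarith)]
            ring
          · rw [max_eq_left (by linarith), max_eq_left (by linarith),
              max_eq_left (by linarith)]
            linear_combination hLrep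

lemma abel_bound (m : ℕ) (d D : ℕ → ℝ) (c : ℝ) (hD0 : D 0 = 0) (hD : ∀ l, 0 ≤ D l)
    (hmono : ∀ i j, i ≤ j → j < m → d i ≤ d j) (hc : ∀ l, l < m → d l ≤ c) :
    ∑ l ∈ range m, d l * (D (l + 1) - D l) ≤ c * D m := by
  induction m generalizing c with
  | zero => simp [hD0]
  | succ n ih =>
    rw [Finset.sum_range_succ]
    have h1 : ∑ l ∈ range n, d l * (D (l + 1) - D l) ≤ d n * D n :=
      ih (d n) (fun i j hij hj => hmono i j hij (hj.trans (Nat.lt_succ_self n)))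
        (fun l hl => hmono l n hl.le (Nat.lt_succ_self n))
    have h2 : d n * D (n + 1) ≤ c * D (n + 1) :=
      mul_le_mul_of_nonneg_right (hc n (Nat.lt_succ_self n)) (hD (n + 1))
    nlinarith [hD n]

lemma stepB (N : ℕ) (hN : 0 < N) (x y : Fin N → ℝ)
    (hx : ∀ j, 0 ≤ x j) (hy : ∀ j, 0 ≤ y j)
    (hsum : ∑ i, x i = ∑ i, y i)
    (hcall : ∀ j, ∑ i, max (x i - y j) 0 ≤ ∑ i, max (y i - y j) 0)
    (f : ℝ → ℝ) (hf : ConvexOn ℝ (Set.Ici 0) f) :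
    ∑ i, f (x i) ≤ ∑ i, f (y i) := by
  classical
  set T : Finset ℝ := insert 0 (Finset.image x Finset.univ ∪ Finset.image y Finset.univ) with hT
  have hT0 : (0:ℝ) ∈ T := Finset.mem_insert_self _ _
  have hTx : ∀ i, x i ∈ T := fun i => by simp [hT]
  have hTy : ∀ i, y i ∈ T := fun i => by simp [hT]
  have hTpos : ∀ a ∈ T, (0:ℝ) ≤ a := by
    intro a ha
    simp only [hT, Finset.mem_insert, Finset.mem_union, Finset.mem_image] at ha
    rcases ha with rfl | ⟨i, -, rfl⟩ | ⟨i, -, rfl⟩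
    · exact le_refl 0
    · exact hx i
    · exact hy i
  have hTne : T.Nonempty := ⟨0, hT0⟩
  set m : ℕ := T.card - 1 with hm
  have hcard : T.card = m + 1 := (Nat.succ_pred_eq_of_pos (Finset.card_pos.mpr hTne)).symm
  set e := T.orderEmbOfFin hcard with he
  set s : ℕ → ℝ := fun k => e ⟨min k m, Nat.lt_succ_of_le (min_le_right _ _)⟩ with hs
  have s_mem : ∀ k, s k ∈ T := fun k => Finset.orderEmbOfFin_mem T hcard _
  have s_nonneg : ∀ k, 0 ≤ s k := fun k => hTpos _ (s_mem k)
  have s_mono : ∀ {k l : ℕ}, k ≤ l → s k ≤ s l := by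
    intro k l hkl
    exact e.monotone (by rw [Fin.mk_le_mk]; omega)
  have s_strict : ∀ k, k < m → s k < s (k + 1) := by
    intro k hk
    apply e.strictMono
    rw [Fin.mk_lt_mk]
    omega
  have s0 : s 0 = 0 := by
    have h2 : (⟨min 0 m, Nat.lt_succ_of_le (min_le_right _ _)⟩ : Fin (m+1)) =
        ⟨0, Nat.succ_pos m⟩ := by simp
    have h1 : s 0 = T.min' hTne := by
      show e _ = _
      rw [h2]
      exact Finset.orderEmbOfFin_zero hcard (Nat.succ_pos m)
    rw [h1]
    exact le_antisymm (Finset.min'_le T 0 hT0) (Finset.le_min' _ _ _ hTpos)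
  have smax : ∀ a ∈ T, a ≤ s m := by
    intro a ha
    have h2 : (⟨min m m, Nat.lt_succ_of_le (min_le_right _ _)⟩ : Fin (m+1)) =
        ⟨(m+1) - 1, Nat.sub_lt (Nat.succ_pos m) Nat.one_pos⟩ := by simp
    have h1 : s m = T.max' hTne := by
      show e _ = _
      rw [h2]
      exact Finset.orderEmbOfFin_last hcard (Nat.succ_pos m)
    rw [h1]
    exact Finset.le_max' T a ha
  have s_surj : ∀ a ∈ T, ∃ k, k ≤ m ∧ s k = a := by
    intro a ha
    have h3 : a ∈ Set.range e := by rw [he, Finset.range_orderEmbOfFin]; exact_mod_cast ha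
    obtain ⟨i, hi⟩ := h3
    refine ⟨i.1, Nat.lt_succ_iff.mp i.2, ?_⟩
    have h2 : (⟨min i.1 m, Nat.lt_succ_of_le (min_le_right _ _)⟩ : Fin (m+1)) = i :=
      Fin.ext (by simp; omega)
    show e _ = a
    rw [h2]
    exact hi
  -- slopes
  set d : ℕ → ℝ := fun l => (f (s (l + 1)) - f (s l)) / (s (l + 1) - s l) with hd
  have d_adj : ∀ l, l + 1 < m → d l ≤ d (l + 1) := by
    intro l hl
    have h1 : s l < s (l + 1) := s_strict l (by omega)
    have h2 : s (l + 1) < s (l + 2) := s_strict (l + 1) hl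
    exact hf.slope_mono_adjacent (s_nonneg l) (s_nonneg (l + 2)) h1 h2
  have d_mono : ∀ i j, i ≤ j → j < m → d i ≤ d j := by
    intro i j hij hj
    induction j with
    | zero => rw [Nat.le_zero.mp hij]
    | succ n ih =>
      rcases Nat.lt_or_ge i (n + 1) with h | h
      · exact le_trans (ih (Nat.lt_succ_iff.mp h) (by omega)) (d_adj n hj)
      · rw [Nat.le_antisymm hij h]
  -- representation of f at nodes
  have key : ∀ p ∈ T, f p = f (s 0) +
      ∑ l ∈ range m, d l * (max (p - s l) 0 - max (p - s (l + 1)) 0) := by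
    intro p hp
    obtain ⟨k, hk, rfl⟩ := s_surj p hp
    have tele : ∑ l ∈ range k, (f (s (l + 1)) - f (s l)) = f (s k) - f (s 0) :=
      Finset.sum_range_sub (fun l => f (s l)) k
    have hzero : ∀ l ∈ range m, l ∉ range k →
        d l * (max (s k - s l) 0 - max (s k - s (l + 1)) 0) = 0 := by
      intro l _ hl
      rw [Finset.mem_range, not_lt] at hl
      have h1 : s k ≤ s l := s_mono hl
      have h2 : s k ≤ s (l + 1) := s_mono (by omega)
      rw [max_eq_right (by linarith), max_eq_right (by linarith)]
      ring
    have hval : ∀ l ∈ range k,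
        d l * (max (s k - s l) 0 - max (s k - s (l + 1)) 0) = f (s (l + 1)) - f (s l) := by
      intro l hl
      rw [Finset.mem_range] at hl
      have h1 : s (l + 1) ≤ s k := s_mono (by omega)
      have h2 : s l < s (l + 1) := s_strict l (by omega)
      have hne : s (l + 1) - s l ≠ 0 := ne_of_gt (by linarith)
      rw [max_eq_left (by linarith), max_eq_left (by linarith),
        show s k - s l - (s k - s (l + 1)) = s (l + 1) - s l from by ring]
      exact div_mul_cancel₀ _ hne
    have hsum2 : ∑ l ∈ range m, d l * (max (s k - s l) 0 - max (s k - s (l + 1)) 0)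
        = ∑ l ∈ range k, (f (s (l + 1)) - f (s l)) := by
      rw [← Finset.sum_subset (Finset.range_subset_range.mpr hk) hzero]
      exact Finset.sum_congr rfl hval
    rw [hsum2, tele]
    ring
  -- sums
  set D : ℕ → ℝ := fun l => ∑ i, max (y i - s l) 0 - ∑ i, max (x i - s l) 0 with hD
  have expand : ∀ z : Fin N → ℝ, (∀ i, z i ∈ T) →
      ∑ i, f (z i) = N * f (s 0) +
        ∑ l ∈ range m, d l * (∑ i, max (z i - s l) 0 - ∑ i, max (z i - s (l + 1)) 0) := by
    intro z hz
    calc ∑ i, f (z i)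
        = ∑ i : Fin N, (f (s 0) +
            ∑ l ∈ range m, d l * (max (z i - s l) 0 - max (z i - s (l + 1)) 0)) :=
          Finset.sum_congr rfl fun i _ => key (z i) (hz i)
      _ = N * f (s 0) +
            ∑ i : Fin N, ∑ l ∈ range m, d l * (max (z i - s l) 0 - max (z i - s (l + 1)) 0) := by
          rw [Finset.sum_add_distrib, Finset.sum_const, Finset.card_univ, Fintype.card_fin,
            nsmul_eq_mul]
      _ = N * f (s 0) +
            ∑ l ∈ range m, d l * (∑ i, max (z i - s l) 0 - ∑ i, max (z i - s (l + 1)) 0) := by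
          rw [Finset.sum_comm]
          congr 1
          refine Finset.sum_congr rfl fun l _ => ?_
          rw [← Finset.mul_sum, Finset.sum_sub_distrib]
  have hdiff : ∑ i, f (x i) - ∑ i, f (y i) = ∑ l ∈ range m, d l * (D (l + 1) - D l) := by
    rw [expand x hTx, expand y hTy]
    have h1 : ∀ l ∈ range m,
        d l * (∑ i, max (x i - s l) 0 - ∑ i, max (x i - s (l + 1)) 0) -
          d l * (∑ i, max (y i - s l) 0 - ∑ i, max (y i - s (l + 1)) 0) =
        d l * (D (l + 1) - D l) := by
      intro l _
      simp only [hD]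
      ring
    rw [show (N : ℝ) * f (s 0) +
        ∑ l ∈ range m, d l * (∑ i, max (x i - s l) 0 - ∑ i, max (x i - s (l + 1)) 0) -
        ((N : ℝ) * f (s 0) +
        ∑ l ∈ range m, d l * (∑ i, max (y i - s l) 0 - ∑ i, max (y i - s (l + 1)) 0)) =
        ∑ l ∈ range m, (d l * (∑ i, max (x i - s l) 0 - ∑ i, max (x i - s (l + 1)) 0) -
          d l * (∑ i, max (y i - s l) 0 - ∑ i, max (y i - s (l + 1)) 0)) from by
        rw [Finset.sum_sub_distrib]; ring]
    exact Finset.sum_congr rfl h1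
  have hD0 : D 0 = 0 := by
    have e1 : ∑ i, max (x i - s 0) 0 = ∑ i, x i :=
      Finset.sum_congr rfl fun i _ => by rw [s0, sub_zero]; exact max_eq_left (hx i)
    have e2 : ∑ i, max (y i - s 0) 0 = ∑ i, y i :=
      Finset.sum_congr rfl fun i _ => by rw [s0, sub_zero]; exact max_eq_left (hy i)
    simp only [hD]
    rw [e1, e2, hsum, sub_self]
  have hDm : D m = 0 := by
    have e1 : ∑ i, max (x i - s m) 0 = 0 :=
      Finset.sum_eq_zero fun i _ => max_eq_right (by linarith [smax (x i) (hTx i)])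
    have e2 : ∑ i, max (y i - s m) 0 = 0 :=
      Finset.sum_eq_zero fun i _ => max_eq_right (by linarith [smax (y i) (hTy i)])
    simp only [hD]
    rw [e1, e2, sub_self]
  have hDpos : ∀ l, 0 ≤ D l := fun l =>
    sub_nonneg.mpr (stepA N hN x y hx hy hsum hcall (s l) (s_nonneg l))
  rcases Nat.eq_zero_or_pos m with h0 | h0
  · rw [h0] at hdiff
    simp only [Finset.range_zero, Finset.sum_empty] at hdiff
    linarith
  · have hab := abel_bound m d D (d (m - 1)) hD0 hDpos d_mono
      (fun l hl => d_mono l (m - 1) (by omega) (by omega))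
    rw [hDm, mul_zero] at hab
    linarith
end Aux

/-- two uniform discrete measures `(1/N)∑δ_{x_j}` and `(1/N)∑δ_{y_j}`
on `ℝ₊` are in convex order iff the call prices `∫ (z−L)₊` are ordered at every
atom `L = y_j` of the second measure and the means coincide. -/
theorem stmt7 (N : ℕ) (hN : 0 < N) (x y : Fin N → ℝ)
    (hx : ∀ j, 0 ≤ x j) (hy : ∀ j, 0 ≤ y j) :
    cvxOrder (emp N x) (emp N y) ↔
      ((∀ j : Fin N,
          ∫ z, max (z - y j) 0 ∂(emp N x) ≤ ∫ z, max (z - y j) 0 ∂(emp N y)) ∧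
        ∫ z, z ∂(emp N x) = ∫ z, z ∂(emp N y)) := by
  have hNpos : (0:ℝ) < (N : ℝ)⁻¹ := by
    rw [inv_pos]; exact_mod_cast hN
  constructor
  · intro h
    refine ⟨fun j => h _ (convexOn_call (y j)) (integrable_emp N hN x _)
      (integrable_emp N hN y _), ?_⟩
    have h1 : ∫ z, z ∂(emp N x) ≤ ∫ z, z ∂(emp N y) :=
      h (fun z => z) (convexOn_id (convex_Ici 0)) (integrable_emp N hN x _)
        (integrable_emp N hN y _)
    have h2 : ∫ z, -z ∂(emp N x) ≤ ∫ z, -z ∂(emp N y) :=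
      h (fun z => -z) convexOn_neg_id (integrable_emp N hN x _) (integrable_emp N hN y _)
    rw [integral_emp, integral_emp] at h1 h2 ⊢
    have h3 : ∑ i, -(x i) = -∑ i, x i := by rw [Finset.sum_neg_distrib]
    have h4 : ∑ i, -(y i) = -∑ i, y i := by rw [Finset.sum_neg_distrib]
    rw [h3, h4] at h2
    have : ∑ i, x i = ∑ i, y i := by nlinarith
    rw [this]
  · rintro ⟨hcall, hmean⟩ f hf _ _
    have hcall' : ∀ j, ∑ i, max (x i - y j) 0 ≤ ∑ i, max (y i - y j) 0 := by
      intro j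
      have := hcall j
      rw [integral_emp, integral_emp] at this
      exact le_of_mul_le_mul_left this hNpos
    have hmean' : ∑ i, x i = ∑ i, y i := by
      have := hmean
      rw [integral_emp, integral_emp] at this
      exact mul_left_cancel₀ (ne_of_gt hNpos) this
    rw [integral_emp, integral_emp]
    exact mul_le_mul_of_nonneg_left (stepB N hN x y hx hy hmean' hcall' f hf) hNpos.le
end

section
/- Let 𝔅, B ∈ (0,∞) and let {Φ_θ : θ ∈ Θ}, Θ ⊂ R^p, be a family of continuous functions Φ_θ: R_+^{nd} → R such that θ ↦ Φ_θ is continuous from (Θ, Euclidean metric) to (C(R_+^{nd},R), sup-norm on [0,B]^{nd}). Let K_1 be a compact subset of market-data tuples (K, π, S_{t0}, θ) on which the super-hedging price D̄^{𝔅,B}_{(K,π,S_{t0})}(Φ_θ) and sub-hedging price D_^{𝔅,B}_{(K,π,S_{t0})}(Φ_θ) are finite. Then the map (K, π, S_{t0}, θ) ↦ (D_^{𝔅,B}_{(K,π,S_{t0})}(Φ_θ), D̄^{𝔅,B}_{(K,π,S_{t0})}(Φ_θ)) is continuous on K_1. -/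
open MeasureTheory Filter Topology
open scoped BigOperators

/-- Payoff of a semi-static trading strategy: cash `a`, long/short call positions
`cP/cM`, long/short put positions `pP/pM`, deterministic initial position `Δ0`,
dynamic positions `Δ i k` (for times `t_i`, `1 ≤ i ≤ n-1`, depending on the path),
with proportional transaction costs `κ`.  The future path is `s 1, …, s n`;
`S0` is the spot. -/
noncomputable def Psi (n d J : ℕ) (κ : ℝ)
    (Kc Kp : Fin n → Fin d → Fin J → ℝ) (S0 : Fin d → ℝ)
    (a : ℝ) (cP cM pP pM : Fin n → Fin d → Fin J → ℝ)
    (Δ0 : Fin d → ℝ) (Δ : ℕ → Fin d → ((ℕ → Fin d → ℝ) → ℝ))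
    (s : ℕ → Fin d → ℝ) : ℝ :=
  a
  + ∑ i : Fin n, ∑ k : Fin d, ∑ j : Fin J,
      (cP i k j - cM i k j) * max (s (i.1 + 1) k - Kc i k j) 0
  + ∑ i : Fin n, ∑ k : Fin d, ∑ j : Fin J,
      (pP i k j - pM i k j) * max (Kp i k j - s (i.1 + 1) k) 0
  + ∑ k : Fin d, (Δ0 k * (s 1 k - S0 k) - κ * |S0 k| * |Δ0 k|)
  + ∑ k : Fin d, ∑ i ∈ Finset.Ico 1 n,
      (Δ i k s * (s (i + 1) k - s i k)
        - κ * |s i k| * |Δ i k s - (if i = 1 then Δ0 k else Δ (i - 1) k s)|)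

/-- The total position size functional `Σ`. -/
noncomputable def Sig (n d J : ℕ) (cP cM pP pM : Fin n → Fin d → Fin J → ℝ)
    (Δ0 : Fin d → ℝ) (Δ : ℕ → Fin d → ((ℕ → Fin d → ℝ) → ℝ)) : ℝ :=
  (∑ i : Fin n, ∑ k : Fin d, ∑ j : Fin J,
      (cP i k j + cM i k j + pP i k j + pM i k j))
  + ∑ k : Fin d, |Δ0 k|
  + ∑ k : Fin d, ∑ i ∈ Finset.Ico 1 n, ⨆ s : ℕ → Fin d → ℝ, |Δ i k s|

/-- Cost of setting up a semi-static strategy w.r.t. bid-ask prices. -/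
noncomputable def Cost (n d J : ℕ) (a : ℝ)
    (cP cM pP pM πcP πcM πpP πpM : Fin n → Fin d → Fin J → ℝ) : ℝ :=
  a + ∑ i : Fin n, ∑ k : Fin d, ∑ j : Fin J,
        (cP i k j * πcP i k j - cM i k j * πcM i k j)
    + ∑ i : Fin n, ∑ k : Fin d, ∑ j : Fin J,
        (pP i k j * πpP i k j - pM i k j * πpM i k j)

/-- `s ∈ [0,B]^{nd}`. -/
def InBox (n d : ℕ) (B : ℝ) (s : ℕ → Fin d → ℝ) : Prop :=
  ∀ i ∈ Finset.Icc 1 n, ∀ k : Fin d, s i k ∈ Set.Icc 0 B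

/-- Prices of super-replication strategies of `Φ`. -/
def PriceUpperSet (n d J : ℕ) (κ 𝔅 B : ℝ)
    (Kc Kp πcP πcM πpP πpM : Fin n → Fin d → Fin J → ℝ) (S0 : Fin d → ℝ)
    (Φ : (ℕ → Fin d → ℝ) → ℝ) : Set ℝ :=
  {r | ∃ (a : ℝ) (cP cM pP pM : Fin n → Fin d → Fin J → ℝ)
        (Δ0 : Fin d → ℝ) (Δ : ℕ → Fin d → ((ℕ → Fin d → ℝ) → ℝ)),
      (∀ i k j, 0 ≤ cP i k j) ∧ (∀ i k j, 0 ≤ cM i k j) ∧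
      (∀ i k j, 0 ≤ pP i k j) ∧ (∀ i k j, 0 ≤ pM i k j) ∧
      (∀ s : ℕ → Fin d → ℝ, InBox n d B s →
        Φ s ≤ Psi n d J κ Kc Kp S0 a cP cM pP pM Δ0 Δ s) ∧
      Sig n d J cP cM pP pM Δ0 Δ ≤ 𝔅 ∧
      r = Cost n d J a cP cM pP pM πcP πcM πpP πpM}

/-- Prices of sub-replication strategies of `Φ`. -/
def PriceLowerSet (n d J : ℕ) (κ 𝔅 B : ℝ)
    (Kc Kp πcP πcM πpP πpM : Fin n → Fin d → Fin J → ℝ) (S0 : Fin d → ℝ)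
    (Φ : (ℕ → Fin d → ℝ) → ℝ) : Set ℝ :=
  {r | ∃ (a : ℝ) (cP cM pP pM : Fin n → Fin d → Fin J → ℝ)
        (Δ0 : Fin d → ℝ) (Δ : ℕ → Fin d → ((ℕ → Fin d → ℝ) → ℝ)),
      (∀ i k j, 0 ≤ cP i k j) ∧ (∀ i k j, 0 ≤ cM i k j) ∧
      (∀ i k j, 0 ≤ pP i k j) ∧ (∀ i k j, 0 ≤ pM i k j) ∧
      (∀ s : ℕ → Fin d → ℝ, InBox n d B s →
        Psi n d J κ Kc Kp S0 a cP cM pP pM Δ0 Δ s ≤ Φ s) ∧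
      Sig n d J cP cM pP pM Δ0 Δ ≤ 𝔅 ∧
      r = Cost n d J a cP cM pP pM πcP πcM πpP πpM}

/-- Market data: call strikes, put strikes, four families of bid-ask prices,
spot prices, and the payoff parameter `θ`. -/
abbrev MarketData (n d J p : ℕ) : Type :=
  (Fin n → Fin d → Fin J → ℝ) × (Fin n → Fin d → Fin J → ℝ) ×
  (Fin n → Fin d → Fin J → ℝ) × (Fin n → Fin d → Fin J → ℝ) ×
  (Fin n → Fin d → Fin J → ℝ) × (Fin n → Fin d → Fin J → ℝ) ×
  (Fin d → ℝ) × (Fin p → ℝ)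

/-- Super-replication price set as a function of the market data. -/
def PriceUpperSetX (n d J p : ℕ) (κ 𝔅 B : ℝ)
    (Φ : (Fin p → ℝ) → (ℕ → Fin d → ℝ) → ℝ) (x : MarketData n d J p) : Set ℝ :=
  PriceUpperSet n d J κ 𝔅 B x.1 x.2.1 x.2.2.1 x.2.2.2.1 x.2.2.2.2.1 x.2.2.2.2.2.1
    x.2.2.2.2.2.2.1 (Φ x.2.2.2.2.2.2.2)

/-- Sub-replication price set as a function of the market data. -/
def PriceLowerSetX (n d J p : ℕ) (κ 𝔅 B : ℝ)
    (Φ : (Fin p → ℝ) → (ℕ → Fin d → ℝ) → ℝ) (x : MarketData n d J p) : Set ℝ :=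
  PriceLowerSet n d J κ 𝔅 B x.1 x.2.1 x.2.2.1 x.2.2.2.1 x.2.2.2.2.1 x.2.2.2.2.2.1
    x.2.2.2.2.2.2.1 (Φ x.2.2.2.2.2.2.2)

/-- Upper (super-hedging) model-free price bound `D̄`. -/
noncomputable def DbarX (n d J p : ℕ) (κ 𝔅 B : ℝ)
    (Φ : (Fin p → ℝ) → (ℕ → Fin d → ℝ) → ℝ) (x : MarketData n d J p) : ℝ :=
  sInf (PriceUpperSetX n d J p κ 𝔅 B Φ x)

/-- Lower (sub-hedging) model-free price bound `D̲`. -/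
noncomputable def DlowX (n d J p : ℕ) (κ 𝔅 B : ℝ)
    (Φ : (Fin p → ℝ) → (ℕ → Fin d → ℝ) → ℝ) (x : MarketData n d J p) : ℝ :=
  sSup (PriceLowerSetX n d J p κ 𝔅 B Φ x)


lemma abs_sum3_sub_le {n d J : ℕ} (f g h : Fin n → Fin d → Fin J → ℝ)
    (hfg : ∀ i k j, |f i k j - g i k j| ≤ h i k j) :
    |(∑ i : Fin n, ∑ k : Fin d, ∑ j : Fin J, f i k j)
      - ∑ i : Fin n, ∑ k : Fin d, ∑ j : Fin J, g i k j|
      ≤ ∑ i : Fin n, ∑ k : Fin d, ∑ j : Fin J, h i k j := by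
  have e : (∑ i : Fin n, ∑ k : Fin d, ∑ j : Fin J, f i k j)
      - ∑ i : Fin n, ∑ k : Fin d, ∑ j : Fin J, g i k j
      = ∑ i : Fin n, ∑ k : Fin d, ∑ j : Fin J, (f i k j - g i k j) := by
    simp [Finset.sum_sub_distrib]
  rw [e]
  refine (Finset.abs_sum_le_sum_abs _ _).trans (Finset.sum_le_sum fun i _ => ?_)
  refine (Finset.abs_sum_le_sum_abs _ _).trans (Finset.sum_le_sum fun k _ => ?_)
  exact (Finset.abs_sum_le_sum_abs _ _).trans (Finset.sum_le_sum fun j _ => hfg i k j)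

lemma abs_sum1_sub_le {d : ℕ} (f g h : Fin d → ℝ)
    (hfg : ∀ k, |f k - g k| ≤ h k) :
    |(∑ k : Fin d, f k) - ∑ k : Fin d, g k| ≤ ∑ k : Fin d, h k := by
  rw [← Finset.sum_sub_distrib]
  exact (Finset.abs_sum_le_sum_abs _ _).trans (Finset.sum_le_sum fun k _ => hfg k)

/-- Transfer of a super-replication strategy between nearby market data. -/
lemma upper_transfer (n d J : ℕ) (κ 𝔅 B D η : ℝ) (hκ : 0 ≤ κ) (hD : 0 ≤ D) (hη : 0 ≤ η)
    (Kc Kp πcP πcM πpP πpM Kc' Kp' πcP' πcM' πpP' πpM' : Fin n → Fin d → Fin J → ℝ)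
    (S0 S0' : Fin d → ℝ) (Φ Φ' : (ℕ → Fin d → ℝ) → ℝ)
    (hKc : ∀ i k j, |Kc' i k j - Kc i k j| ≤ D)
    (hKp : ∀ i k j, |Kp' i k j - Kp i k j| ≤ D)
    (hπcP : ∀ i k j, |πcP' i k j - πcP i k j| ≤ D)
    (hπcM : ∀ i k j, |πcM' i k j - πcM i k j| ≤ D)
    (hπpP : ∀ i k j, |πpP' i k j - πpP i k j| ≤ D)
    (hπpM : ∀ i k j, |πpM' i k j - πpM i k j| ≤ D)
    (hS0 : ∀ k, |S0' k - S0 k| ≤ D)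
    (hΦ : ∀ s, InBox n d B s → |Φ' s - Φ s| ≤ η)
    (r : ℝ) (hr : r ∈ PriceUpperSet n d J κ 𝔅 B Kc Kp πcP πcM πpP πpM S0 Φ) :
    ∃ r' ∈ PriceUpperSet n d J κ 𝔅 B Kc' Kp' πcP' πcM' πpP' πpM' S0' Φ',
      r' ≤ r + ((3 + κ) * 𝔅 * D + η) := by
  obtain ⟨a, cP, cM, pP, pM, Δ0, Δ, hcP, hcM, hpP, hpM, hrep, hSig, hrc⟩ := hr
  -- bounds from Sig ≤ 𝔅
  have hS3 : (0:ℝ) ≤ ∑ k : Fin d, ∑ i ∈ Finset.Ico 1 n, ⨆ s : ℕ → Fin d → ℝ, |Δ i k s| :=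
    Finset.sum_nonneg fun k _ => Finset.sum_nonneg fun i _ =>
      Real.iSup_nonneg fun s => abs_nonneg _
  have hS2 : (0:ℝ) ≤ ∑ k : Fin d, |Δ0 k| := Finset.sum_nonneg fun k _ => abs_nonneg _
  have hS1 : (0:ℝ) ≤ ∑ i : Fin n, ∑ k : Fin d, ∑ j : Fin J,
      (cP i k j + cM i k j + pP i k j + pM i k j) :=
    Finset.sum_nonneg fun i _ => Finset.sum_nonneg fun k _ => Finset.sum_nonneg fun j _ => by
      have := hcP i k j; have := hcM i k j; have := hpP i k j; have := hpM i k j; linarith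
  unfold Sig at hSig
  have hSOpt : (∑ i : Fin n, ∑ k : Fin d, ∑ j : Fin J,
      (cP i k j + cM i k j + pP i k j + pM i k j)) ≤ 𝔅 := by linarith
  have hSΔ0 : (∑ k : Fin d, |Δ0 k|) ≤ 𝔅 := by linarith
  -- sum of option positions splits
  have hsplit : (∑ i : Fin n, ∑ k : Fin d, ∑ j : Fin J,
        (cP i k j + cM i k j + pP i k j + pM i k j))
      = (∑ i : Fin n, ∑ k : Fin d, ∑ j : Fin J, (cP i k j + cM i k j))
        + (∑ i : Fin n, ∑ k : Fin d, ∑ j : Fin J, (pP i k j + pM i k j)) := by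
    simp [Finset.sum_add_distrib]; ring
  -- key comparison of Psi values
  have key : ∀ s : ℕ → Fin d → ℝ,
      Psi n d J κ Kc Kp S0 a cP cM pP pM Δ0 Δ s
        ≤ Psi n d J κ Kc' Kp' S0' a cP cM pP pM Δ0 Δ s + (2 + κ) * 𝔅 * D := by
    intro s
    have hA : |(∑ i : Fin n, ∑ k : Fin d, ∑ j : Fin J,
          (cP i k j - cM i k j) * max (s (i.1 + 1) k - Kc i k j) 0)
        - ∑ i : Fin n, ∑ k : Fin d, ∑ j : Fin J,
          (cP i k j - cM i k j) * max (s (i.1 + 1) k - Kc' i k j) 0|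
        ≤ ∑ i : Fin n, ∑ k : Fin d, ∑ j : Fin J, (cP i k j + cM i k j) * D := by
      refine abs_sum3_sub_le _ _ _ fun i k j => ?_
      rw [← mul_sub, abs_mul]
      refine mul_le_mul ?_ ?_ (abs_nonneg _) ?_
      · have h1 := hcP i k j; have h2 := hcM i k j
        rw [abs_le]; constructor <;> linarith
      · refine (abs_max_sub_max_le_abs _ _ _).trans ?_
        have : s (i.1 + 1) k - Kc i k j - (s (i.1 + 1) k - Kc' i k j)
            = Kc' i k j - Kc i k j := by ring
        rw [this]; exact hKc i k j
      · have h1 := hcP i k j; have h2 := hcM i k j; linarith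
    have hP : |(∑ i : Fin n, ∑ k : Fin d, ∑ j : Fin J,
          (pP i k j - pM i k j) * max (Kp i k j - s (i.1 + 1) k) 0)
        - ∑ i : Fin n, ∑ k : Fin d, ∑ j : Fin J,
          (pP i k j - pM i k j) * max (Kp' i k j - s (i.1 + 1) k) 0|
        ≤ ∑ i : Fin n, ∑ k : Fin d, ∑ j : Fin J, (pP i k j + pM i k j) * D := by
      refine abs_sum3_sub_le _ _ _ fun i k j => ?_
      rw [← mul_sub, abs_mul]
      refine mul_le_mul ?_ ?_ (abs_nonneg _) ?_
      · have h1 := hpP i k j; have h2 := hpM i k j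
        rw [abs_le]; constructor <;> linarith
      · refine (abs_max_sub_max_le_abs _ _ _).trans ?_
        have : Kp i k j - s (i.1 + 1) k - (Kp' i k j - s (i.1 + 1) k)
            = Kp i k j - Kp' i k j := by ring
        rw [this, abs_sub_comm]; exact hKp i k j
      · have h1 := hpP i k j; have h2 := hpM i k j; linarith
    have hT0 : abs ((∑ k : Fin d, (Δ0 k * (s 1 k - S0 k) - κ * |S0 k| * |Δ0 k|))
        - ∑ k : Fin d, (Δ0 k * (s 1 k - S0' k) - κ * |S0' k| * |Δ0 k|))
        ≤ ∑ k : Fin d, (1 + κ) * |Δ0 k| * D := by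
      refine abs_sum1_sub_le _ _ _ fun k => ?_
      have e : Δ0 k * (s 1 k - S0 k) - κ * |S0 k| * |Δ0 k|
          - (Δ0 k * (s 1 k - S0' k) - κ * |S0' k| * |Δ0 k|)
          = Δ0 k * (S0' k - S0 k) + κ * (|S0' k| - |S0 k|) * |Δ0 k| := by ring
      rw [e]
      have h1 : |Δ0 k * (S0' k - S0 k)| ≤ |Δ0 k| * D := by
        rw [abs_mul]
        exact mul_le_mul_of_nonneg_left (hS0 k) (abs_nonneg _)
      have h2 : abs (κ * (|S0' k| - |S0 k|) * |Δ0 k|) ≤ κ * D * |Δ0 k| := by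
        rw [abs_mul, abs_mul, abs_abs, abs_of_nonneg hκ]
        have h3 : abs (|S0' k| - |S0 k|) ≤ D := (abs_abs_sub_abs_le_abs_sub _ _).trans (hS0 k)
        exact mul_le_mul_of_nonneg_right (mul_le_mul_of_nonneg_left h3 hκ) (abs_nonneg _)
      calc abs (Δ0 k * (S0' k - S0 k) + κ * (|S0' k| - |S0 k|) * |Δ0 k|)
          ≤ |Δ0 k * (S0' k - S0 k)| + abs (κ * (|S0' k| - |S0 k|) * |Δ0 k|) := abs_add_le _ _
        _ ≤ |Δ0 k| * D + κ * D * |Δ0 k| := add_le_add h1 h2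
        _ = (1 + κ) * |Δ0 k| * D := by ring
    -- turn sums of products into products of sums
    have eA : (∑ i : Fin n, ∑ k : Fin d, ∑ j : Fin J, (cP i k j + cM i k j) * D)
        = (∑ i : Fin n, ∑ k : Fin d, ∑ j : Fin J, (cP i k j + cM i k j)) * D := by
      simp [Finset.sum_mul]
    have eP : (∑ i : Fin n, ∑ k : Fin d, ∑ j : Fin J, (pP i k j + pM i k j) * D)
        = (∑ i : Fin n, ∑ k : Fin d, ∑ j : Fin J, (pP i k j + pM i k j)) * D := by
      simp [Finset.sum_mul]
    have eT : (∑ k : Fin d, (1 + κ) * |Δ0 k| * D)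
        = (1 + κ) * (∑ k : Fin d, |Δ0 k|) * D := by
      simp [Finset.sum_mul, Finset.mul_sum]
    rw [eA] at hA; rw [eP] at hP; rw [eT] at hT0
    have hX : (0:ℝ) ≤ ∑ i : Fin n, ∑ k : Fin d, ∑ j : Fin J, (cP i k j + cM i k j) :=
      Finset.sum_nonneg fun i _ => Finset.sum_nonneg fun k _ => Finset.sum_nonneg fun j _ => by
        have := hcP i k j; have := hcM i k j; linarith
    have hY : (0:ℝ) ≤ ∑ i : Fin n, ∑ k : Fin d, ∑ j : Fin J, (pP i k j + pM i k j) :=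
      Finset.sum_nonneg fun i _ => Finset.sum_nonneg fun k _ => Finset.sum_nonneg fun j _ => by
        have := hpP i k j; have := hpM i k j; linarith
    have hXY : (∑ i : Fin n, ∑ k : Fin d, ∑ j : Fin J, (cP i k j + cM i k j))
        + (∑ i : Fin n, ∑ k : Fin d, ∑ j : Fin J, (pP i k j + pM i k j)) ≤ 𝔅 := by
      rw [← hsplit]; exact hSOpt
    have hAle := (abs_le.mp hA).2
    have hPle := (abs_le.mp hP).2
    have hTle := (abs_le.mp hT0).2
    unfold Psi
    have hprod : (∑ i : Fin n, ∑ k : Fin d, ∑ j : Fin J, (cP i k j + cM i k j)) * D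
        + (∑ i : Fin n, ∑ k : Fin d, ∑ j : Fin J, (pP i k j + pM i k j)) * D
        + (1 + κ) * (∑ k : Fin d, |Δ0 k|) * D ≤ (2 + κ) * 𝔅 * D := by
      nlinarith [mul_le_mul_of_nonneg_right hXY hD,
        mul_le_mul_of_nonneg_right hSΔ0 hD,
        mul_nonneg (mul_nonneg (by linarith : (0:ℝ) ≤ 1 + κ)
          (sub_nonneg.mpr hSΔ0)) hD]
    linarith
  refine ⟨Cost n d J (a + ((2 + κ) * 𝔅 * D + η)) cP cM pP pM πcP' πcM' πpP' πpM',
    ⟨a + ((2 + κ) * 𝔅 * D + η), cP, cM, pP, pM, Δ0, Δ, hcP, hcM, hpP, hpM, ?_,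
      by unfold Sig; linarith, rfl⟩, ?_⟩
  · intro s hs
    have h1 := (abs_le.mp (hΦ s hs)).2
    have h2 := hrep s hs
    have h3 := key s
    have h4 : Psi n d J κ Kc' Kp' S0' (a + ((2 + κ) * 𝔅 * D + η)) cP cM pP pM Δ0 Δ s
        = Psi n d J κ Kc' Kp' S0' a cP cM pP pM Δ0 Δ s + ((2 + κ) * 𝔅 * D + η) := by
      unfold Psi; ring
    rw [h4]; linarith
  · -- cost comparison
    have hπ : |(∑ i : Fin n, ∑ k : Fin d, ∑ j : Fin J,
          (cP i k j * πcP' i k j - cM i k j * πcM' i k j))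
        - ∑ i : Fin n, ∑ k : Fin d, ∑ j : Fin J,
          (cP i k j * πcP i k j - cM i k j * πcM i k j)|
        ≤ ∑ i : Fin n, ∑ k : Fin d, ∑ j : Fin J, (cP i k j + cM i k j) * D := by
      refine abs_sum3_sub_le _ _ _ fun i k j => ?_
      have e : cP i k j * πcP' i k j - cM i k j * πcM' i k j
          - (cP i k j * πcP i k j - cM i k j * πcM i k j)
          = cP i k j * (πcP' i k j - πcP i k j)
            - cM i k j * (πcM' i k j - πcM i k j) := by ring
      rw [e]
      have h1 : |cP i k j * (πcP' i k j - πcP i k j)| ≤ cP i k j * D := by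
        rw [abs_mul, abs_of_nonneg (hcP i k j)]
        exact mul_le_mul_of_nonneg_left (hπcP i k j) (hcP i k j)
      have h2 : |cM i k j * (πcM' i k j - πcM i k j)| ≤ cM i k j * D := by
        rw [abs_mul, abs_of_nonneg (hcM i k j)]
        exact mul_le_mul_of_nonneg_left (hπcM i k j) (hcM i k j)
      calc |cP i k j * (πcP' i k j - πcP i k j) - cM i k j * (πcM' i k j - πcM i k j)|
          ≤ |cP i k j * (πcP' i k j - πcP i k j)| + |cM i k j * (πcM' i k j - πcM i k j)| :=
            abs_sub _ _
        _ ≤ cP i k j * D + cM i k j * D := add_le_add h1 h2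
        _ = (cP i k j + cM i k j) * D := by ring
    have hρ : |(∑ i : Fin n, ∑ k : Fin d, ∑ j : Fin J,
          (pP i k j * πpP' i k j - pM i k j * πpM' i k j))
        - ∑ i : Fin n, ∑ k : Fin d, ∑ j : Fin J,
          (pP i k j * πpP i k j - pM i k j * πpM i k j)|
        ≤ ∑ i : Fin n, ∑ k : Fin d, ∑ j : Fin J, (pP i k j + pM i k j) * D := by
      refine abs_sum3_sub_le _ _ _ fun i k j => ?_
      have e : pP i k j * πpP' i k j - pM i k j * πpM' i k j
          - (pP i k j * πpP i k j - pM i k j * πpM i k j)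
          = pP i k j * (πpP' i k j - πpP i k j)
            - pM i k j * (πpM' i k j - πpM i k j) := by ring
      rw [e]
      have h1 : |pP i k j * (πpP' i k j - πpP i k j)| ≤ pP i k j * D := by
        rw [abs_mul, abs_of_nonneg (hpP i k j)]
        exact mul_le_mul_of_nonneg_left (hπpP i k j) (hpP i k j)
      have h2 : |pM i k j * (πpM' i k j - πpM i k j)| ≤ pM i k j * D := by
        rw [abs_mul, abs_of_nonneg (hpM i k j)]
        exact mul_le_mul_of_nonneg_left (hπpM i k j) (hpM i k j)
      calc |pP i k j * (πpP' i k j - πpP i k j) - pM i k j * (πpM' i k j - πpM i k j)|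
          ≤ |pP i k j * (πpP' i k j - πpP i k j)| + |pM i k j * (πpM' i k j - πpM i k j)| :=
            abs_sub _ _
        _ ≤ pP i k j * D + pM i k j * D := add_le_add h1 h2
        _ = (pP i k j + pM i k j) * D := by ring
    have eA : (∑ i : Fin n, ∑ k : Fin d, ∑ j : Fin J, (cP i k j + cM i k j) * D)
        = (∑ i : Fin n, ∑ k : Fin d, ∑ j : Fin J, (cP i k j + cM i k j)) * D := by
      simp [Finset.sum_mul]
    have eP : (∑ i : Fin n, ∑ k : Fin d, ∑ j : Fin J, (pP i k j + pM i k j) * D)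
        = (∑ i : Fin n, ∑ k : Fin d, ∑ j : Fin J, (pP i k j + pM i k j)) * D := by
      simp [Finset.sum_mul]
    rw [eA] at hπ; rw [eP] at hρ
    have hXY : (∑ i : Fin n, ∑ k : Fin d, ∑ j : Fin J, (cP i k j + cM i k j))
        + (∑ i : Fin n, ∑ k : Fin d, ∑ j : Fin J, (pP i k j + pM i k j)) ≤ 𝔅 := by
      rw [← hsplit]; exact hSOpt
    have hπle := (abs_le.mp hπ).2
    have hρle := (abs_le.mp hρ).2
    have hprod := mul_le_mul_of_nonneg_right hXY hD
    rw [hrc]; unfold Cost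
    nlinarith [hπle, hρle, hprod]

/-- Transfer of a sub-replication strategy between nearby market data. -/
lemma lower_transfer (n d J : ℕ) (κ 𝔅 B D η : ℝ) (hκ : 0 ≤ κ) (hD : 0 ≤ D) (hη : 0 ≤ η)
    (Kc Kp πcP πcM πpP πpM Kc' Kp' πcP' πcM' πpP' πpM' : Fin n → Fin d → Fin J → ℝ)
    (S0 S0' : Fin d → ℝ) (Φ Φ' : (ℕ → Fin d → ℝ) → ℝ)
    (hKc : ∀ i k j, |Kc' i k j - Kc i k j| ≤ D)
    (hKp : ∀ i k j, |Kp' i k j - Kp i k j| ≤ D)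
    (hπcP : ∀ i k j, |πcP' i k j - πcP i k j| ≤ D)
    (hπcM : ∀ i k j, |πcM' i k j - πcM i k j| ≤ D)
    (hπpP : ∀ i k j, |πpP' i k j - πpP i k j| ≤ D)
    (hπpM : ∀ i k j, |πpM' i k j - πpM i k j| ≤ D)
    (hS0 : ∀ k, |S0' k - S0 k| ≤ D)
    (hΦ : ∀ s, InBox n d B s → |Φ' s - Φ s| ≤ η)
    (r : ℝ) (hr : r ∈ PriceLowerSet n d J κ 𝔅 B Kc Kp πcP πcM πpP πpM S0 Φ) :
    ∃ r' ∈ PriceLowerSet n d J κ 𝔅 B Kc' Kp' πcP' πcM' πpP' πpM' S0' Φ',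
      r - ((3 + κ) * 𝔅 * D + η) ≤ r' := by
  obtain ⟨a, cP, cM, pP, pM, Δ0, Δ, hcP, hcM, hpP, hpM, hrep, hSig, hrc⟩ := hr
  -- bounds from Sig ≤ 𝔅
  have hS3 : (0:ℝ) ≤ ∑ k : Fin d, ∑ i ∈ Finset.Ico 1 n, ⨆ s : ℕ → Fin d → ℝ, |Δ i k s| :=
    Finset.sum_nonneg fun k _ => Finset.sum_nonneg fun i _ =>
      Real.iSup_nonneg fun s => abs_nonneg _
  have hS2 : (0:ℝ) ≤ ∑ k : Fin d, |Δ0 k| := Finset.sum_nonneg fun k _ => abs_nonneg _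
  have hS1 : (0:ℝ) ≤ ∑ i : Fin n, ∑ k : Fin d, ∑ j : Fin J,
      (cP i k j + cM i k j + pP i k j + pM i k j) :=
    Finset.sum_nonneg fun i _ => Finset.sum_nonneg fun k _ => Finset.sum_nonneg fun j _ => by
      have := hcP i k j; have := hcM i k j; have := hpP i k j; have := hpM i k j; linarith
  unfold Sig at hSig
  have hSOpt : (∑ i : Fin n, ∑ k : Fin d, ∑ j : Fin J,
      (cP i k j + cM i k j + pP i k j + pM i k j)) ≤ 𝔅 := by linarith
  have hSΔ0 : (∑ k : Fin d, |Δ0 k|) ≤ 𝔅 := by linarith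
  -- sum of option positions splits
  have hsplit : (∑ i : Fin n, ∑ k : Fin d, ∑ j : Fin J,
        (cP i k j + cM i k j + pP i k j + pM i k j))
      = (∑ i : Fin n, ∑ k : Fin d, ∑ j : Fin J, (cP i k j + cM i k j))
        + (∑ i : Fin n, ∑ k : Fin d, ∑ j : Fin J, (pP i k j + pM i k j)) := by
    simp [Finset.sum_add_distrib]; ring
  -- key comparison of Psi values
  have key : ∀ s : ℕ → Fin d → ℝ,
      Psi n d J κ Kc' Kp' S0' a cP cM pP pM Δ0 Δ s
        ≤ Psi n d J κ Kc Kp S0 a cP cM pP pM Δ0 Δ s + (2 + κ) * 𝔅 * D := by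
    intro s
    have hA : |(∑ i : Fin n, ∑ k : Fin d, ∑ j : Fin J,
          (cP i k j - cM i k j) * max (s (i.1 + 1) k - Kc i k j) 0)
        - ∑ i : Fin n, ∑ k : Fin d, ∑ j : Fin J,
          (cP i k j - cM i k j) * max (s (i.1 + 1) k - Kc' i k j) 0|
        ≤ ∑ i : Fin n, ∑ k : Fin d, ∑ j : Fin J, (cP i k j + cM i k j) * D := by
      refine abs_sum3_sub_le _ _ _ fun i k j => ?_
      rw [← mul_sub, abs_mul]
      refine mul_le_mul ?_ ?_ (abs_nonneg _) ?_
      · have h1 := hcP i k j; have h2 := hcM i k j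
        rw [abs_le]; constructor <;> linarith
      · refine (abs_max_sub_max_le_abs _ _ _).trans ?_
        have : s (i.1 + 1) k - Kc i k j - (s (i.1 + 1) k - Kc' i k j)
            = Kc' i k j - Kc i k j := by ring
        rw [this]; exact hKc i k j
      · have h1 := hcP i k j; have h2 := hcM i k j; linarith
    have hP : |(∑ i : Fin n, ∑ k : Fin d, ∑ j : Fin J,
          (pP i k j - pM i k j) * max (Kp i k j - s (i.1 + 1) k) 0)
        - ∑ i : Fin n, ∑ k : Fin d, ∑ j : Fin J,
          (pP i k j - pM i k j) * max (Kp' i k j - s (i.1 + 1) k) 0|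
        ≤ ∑ i : Fin n, ∑ k : Fin d, ∑ j : Fin J, (pP i k j + pM i k j) * D := by
      refine abs_sum3_sub_le _ _ _ fun i k j => ?_
      rw [← mul_sub, abs_mul]
      refine mul_le_mul ?_ ?_ (abs_nonneg _) ?_
      · have h1 := hpP i k j; have h2 := hpM i k j
        rw [abs_le]; constructor <;> linarith
      · refine (abs_max_sub_max_le_abs _ _ _).trans ?_
        have : Kp i k j - s (i.1 + 1) k - (Kp' i k j - s (i.1 + 1) k)
            = Kp i k j - Kp' i k j := by ring
        rw [this, abs_sub_comm]; exact hKp i k j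
      · have h1 := hpP i k j; have h2 := hpM i k j; linarith
    have hT0 : abs ((∑ k : Fin d, (Δ0 k * (s 1 k - S0 k) - κ * |S0 k| * |Δ0 k|))
        - ∑ k : Fin d, (Δ0 k * (s 1 k - S0' k) - κ * |S0' k| * |Δ0 k|))
        ≤ ∑ k : Fin d, (1 + κ) * |Δ0 k| * D := by
      refine abs_sum1_sub_le _ _ _ fun k => ?_
      have e : Δ0 k * (s 1 k - S0 k) - κ * |S0 k| * |Δ0 k|
          - (Δ0 k * (s 1 k - S0' k) - κ * |S0' k| * |Δ0 k|)
          = Δ0 k * (S0' k - S0 k) + κ * (|S0' k| - |S0 k|) * |Δ0 k| := by ring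
      rw [e]
      have h1 : |Δ0 k * (S0' k - S0 k)| ≤ |Δ0 k| * D := by
        rw [abs_mul]
        exact mul_le_mul_of_nonneg_left (hS0 k) (abs_nonneg _)
      have h2 : abs (κ * (|S0' k| - |S0 k|) * |Δ0 k|) ≤ κ * D * |Δ0 k| := by
        rw [abs_mul, abs_mul, abs_abs, abs_of_nonneg hκ]
        have h3 : abs (|S0' k| - |S0 k|) ≤ D := (abs_abs_sub_abs_le_abs_sub _ _).trans (hS0 k)
        exact mul_le_mul_of_nonneg_right (mul_le_mul_of_nonneg_left h3 hκ) (abs_nonneg _)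
      calc abs (Δ0 k * (S0' k - S0 k) + κ * (|S0' k| - |S0 k|) * |Δ0 k|)
          ≤ |Δ0 k * (S0' k - S0 k)| + abs (κ * (|S0' k| - |S0 k|) * |Δ0 k|) := abs_add_le _ _
        _ ≤ |Δ0 k| * D + κ * D * |Δ0 k| := add_le_add h1 h2
        _ = (1 + κ) * |Δ0 k| * D := by ring
    -- turn sums of products into products of sums
    have eA : (∑ i : Fin n, ∑ k : Fin d, ∑ j : Fin J, (cP i k j + cM i k j) * D)
        = (∑ i : Fin n, ∑ k : Fin d, ∑ j : Fin J, (cP i k j + cM i k j)) * D := by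
      simp [Finset.sum_mul]
    have eP : (∑ i : Fin n, ∑ k : Fin d, ∑ j : Fin J, (pP i k j + pM i k j) * D)
        = (∑ i : Fin n, ∑ k : Fin d, ∑ j : Fin J, (pP i k j + pM i k j)) * D := by
      simp [Finset.sum_mul]
    have eT : (∑ k : Fin d, (1 + κ) * |Δ0 k| * D)
        = (1 + κ) * (∑ k : Fin d, |Δ0 k|) * D := by
      simp [Finset.sum_mul, Finset.mul_sum]
    rw [eA] at hA; rw [eP] at hP; rw [eT] at hT0
    have hX : (0:ℝ) ≤ ∑ i : Fin n, ∑ k : Fin d, ∑ j : Fin J, (cP i k j + cM i k j) :=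
      Finset.sum_nonneg fun i _ => Finset.sum_nonneg fun k _ => Finset.sum_nonneg fun j _ => by
        have := hcP i k j; have := hcM i k j; linarith
    have hY : (0:ℝ) ≤ ∑ i : Fin n, ∑ k : Fin d, ∑ j : Fin J, (pP i k j + pM i k j) :=
      Finset.sum_nonneg fun i _ => Finset.sum_nonneg fun k _ => Finset.sum_nonneg fun j _ => by
        have := hpP i k j; have := hpM i k j; linarith
    have hXY : (∑ i : Fin n, ∑ k : Fin d, ∑ j : Fin J, (cP i k j + cM i k j))
        + (∑ i : Fin n, ∑ k : Fin d, ∑ j : Fin J, (pP i k j + pM i k j)) ≤ 𝔅 := by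
      rw [← hsplit]; exact hSOpt
    have hAle := (abs_le.mp hA).1
    have hPle := (abs_le.mp hP).1
    have hTle := (abs_le.mp hT0).1
    unfold Psi
    have hprod : (∑ i : Fin n, ∑ k : Fin d, ∑ j : Fin J, (cP i k j + cM i k j)) * D
        + (∑ i : Fin n, ∑ k : Fin d, ∑ j : Fin J, (pP i k j + pM i k j)) * D
        + (1 + κ) * (∑ k : Fin d, |Δ0 k|) * D ≤ (2 + κ) * 𝔅 * D := by
      nlinarith [mul_le_mul_of_nonneg_right hXY hD,
        mul_le_mul_of_nonneg_right hSΔ0 hD,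
        mul_nonneg (mul_nonneg (by linarith : (0:ℝ) ≤ 1 + κ)
          (sub_nonneg.mpr hSΔ0)) hD]
    linarith
  refine ⟨Cost n d J (a - ((2 + κ) * 𝔅 * D + η)) cP cM pP pM πcP' πcM' πpP' πpM',
    ⟨a - ((2 + κ) * 𝔅 * D + η), cP, cM, pP, pM, Δ0, Δ, hcP, hcM, hpP, hpM, ?_,
      by unfold Sig; linarith, rfl⟩, ?_⟩
  · intro s hs
    have h1 := (abs_le.mp (hΦ s hs)).1
    have h2 := hrep s hs
    have h3 := key s
    have h4 : Psi n d J κ Kc' Kp' S0' (a - ((2 + κ) * 𝔅 * D + η)) cP cM pP pM Δ0 Δ s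
        = Psi n d J κ Kc' Kp' S0' a cP cM pP pM Δ0 Δ s - ((2 + κ) * 𝔅 * D + η) := by
      unfold Psi; ring
    rw [h4]; linarith
  · -- cost comparison
    have hπ : |(∑ i : Fin n, ∑ k : Fin d, ∑ j : Fin J,
          (cP i k j * πcP' i k j - cM i k j * πcM' i k j))
        - ∑ i : Fin n, ∑ k : Fin d, ∑ j : Fin J,
          (cP i k j * πcP i k j - cM i k j * πcM i k j)|
        ≤ ∑ i : Fin n, ∑ k : Fin d, ∑ j : Fin J, (cP i k j + cM i k j) * D := by
      refine abs_sum3_sub_le _ _ _ fun i k j => ?_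
      have e : cP i k j * πcP' i k j - cM i k j * πcM' i k j
          - (cP i k j * πcP i k j - cM i k j * πcM i k j)
          = cP i k j * (πcP' i k j - πcP i k j)
            - cM i k j * (πcM' i k j - πcM i k j) := by ring
      rw [e]
      have h1 : |cP i k j * (πcP' i k j - πcP i k j)| ≤ cP i k j * D := by
        rw [abs_mul, abs_of_nonneg (hcP i k j)]
        exact mul_le_mul_of_nonneg_left (hπcP i k j) (hcP i k j)
      have h2 : |cM i k j * (πcM' i k j - πcM i k j)| ≤ cM i k j * D := by
        rw [abs_mul, abs_of_nonneg (hcM i k j)]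
        exact mul_le_mul_of_nonneg_left (hπcM i k j) (hcM i k j)
      calc |cP i k j * (πcP' i k j - πcP i k j) - cM i k j * (πcM' i k j - πcM i k j)|
          ≤ |cP i k j * (πcP' i k j - πcP i k j)| + |cM i k j * (πcM' i k j - πcM i k j)| :=
            abs_sub _ _
        _ ≤ cP i k j * D + cM i k j * D := add_le_add h1 h2
        _ = (cP i k j + cM i k j) * D := by ring
    have hρ : |(∑ i : Fin n, ∑ k : Fin d, ∑ j : Fin J,
          (pP i k j * πpP' i k j - pM i k j * πpM' i k j))
        - ∑ i : Fin n, ∑ k : Fin d, ∑ j : Fin J,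
          (pP i k j * πpP i k j - pM i k j * πpM i k j)|
        ≤ ∑ i : Fin n, ∑ k : Fin d, ∑ j : Fin J, (pP i k j + pM i k j) * D := by
      refine abs_sum3_sub_le _ _ _ fun i k j => ?_
      have e : pP i k j * πpP' i k j - pM i k j * πpM' i k j
          - (pP i k j * πpP i k j - pM i k j * πpM i k j)
          = pP i k j * (πpP' i k j - πpP i k j)
            - pM i k j * (πpM' i k j - πpM i k j) := by ring
      rw [e]
      have h1 : |pP i k j * (πpP' i k j - πpP i k j)| ≤ pP i k j * D := by
        rw [abs_mul, abs_of_nonneg (hpP i k j)]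
        exact mul_le_mul_of_nonneg_left (hπpP i k j) (hpP i k j)
      have h2 : |pM i k j * (πpM' i k j - πpM i k j)| ≤ pM i k j * D := by
        rw [abs_mul, abs_of_nonneg (hpM i k j)]
        exact mul_le_mul_of_nonneg_left (hπpM i k j) (hpM i k j)
      calc |pP i k j * (πpP' i k j - πpP i k j) - pM i k j * (πpM' i k j - πpM i k j)|
          ≤ |pP i k j * (πpP' i k j - πpP i k j)| + |pM i k j * (πpM' i k j - πpM i k j)| :=
            abs_sub _ _
        _ ≤ pP i k j * D + pM i k j * D := add_le_add h1 h2
        _ = (pP i k j + pM i k j) * D := by ring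
    have eA : (∑ i : Fin n, ∑ k : Fin d, ∑ j : Fin J, (cP i k j + cM i k j) * D)
        = (∑ i : Fin n, ∑ k : Fin d, ∑ j : Fin J, (cP i k j + cM i k j)) * D := by
      simp [Finset.sum_mul]
    have eP : (∑ i : Fin n, ∑ k : Fin d, ∑ j : Fin J, (pP i k j + pM i k j) * D)
        = (∑ i : Fin n, ∑ k : Fin d, ∑ j : Fin J, (pP i k j + pM i k j)) * D := by
      simp [Finset.sum_mul]
    rw [eA] at hπ; rw [eP] at hρ
    have hXY : (∑ i : Fin n, ∑ k : Fin d, ∑ j : Fin J, (cP i k j + cM i k j))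
        + (∑ i : Fin n, ∑ k : Fin d, ∑ j : Fin J, (pP i k j + pM i k j)) ≤ 𝔅 := by
      rw [← hsplit]; exact hSOpt
    have hπle := (abs_le.mp hπ).1
    have hρle := (abs_le.mp hρ).1
    have hprod := mul_le_mul_of_nonneg_right hXY hD
    rw [hrc]; unfold Cost
    nlinarith [hπle, hρle, hprod]

lemma prod_dist_fst {α β : Type*} [PseudoMetricSpace α] [PseudoMetricSpace β]
    (y z : α × β) : dist y.1 z.1 ≤ dist y z := by
  rw [Prod.dist_eq]; exact le_max_left _ _

lemma prod_dist_snd {α β : Type*} [PseudoMetricSpace α] [PseudoMetricSpace β]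
    (y z : α × β) : dist y.2 z.2 ≤ dist y z := by
  rw [Prod.dist_eq]; exact le_max_right _ _

lemma pi3_abs_le_dist {n d J : ℕ} (f g : Fin n → Fin d → Fin J → ℝ)
    (i : Fin n) (k : Fin d) (j : Fin J) : |f i k j - g i k j| ≤ dist f g := by
  have h1 : dist (f i k j) (g i k j) ≤ dist (f i k) (g i k) := dist_le_pi_dist _ _ _
  have h2 : dist (f i k) (g i k) ≤ dist (f i) (g i) := dist_le_pi_dist _ _ _
  have h3 : dist (f i) (g i) ≤ dist f g := dist_le_pi_dist _ _ _
  calc |f i k j - g i k j| = dist (f i k j) (g i k j) := (Real.dist_eq _ _).symm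
    _ ≤ dist f g := h1.trans (h2.trans h3)

lemma pi1_abs_le_dist {d : ℕ} (f g : Fin d → ℝ) (k : Fin d) :
    |f k - g k| ≤ dist f g := by
  calc |f k - g k| = dist (f k) (g k) := (Real.dist_eq _ _).symm
    _ ≤ dist f g := dist_le_pi_dist _ _ _

lemma md_dist_bounds {n d J p : ℕ} (y z : MarketData n d J p) :
    (∀ i k j, |y.1 i k j - z.1 i k j| ≤ dist y z) ∧
    (∀ i k j, |y.2.1 i k j - z.2.1 i k j| ≤ dist y z) ∧
    (∀ i k j, |y.2.2.1 i k j - z.2.2.1 i k j| ≤ dist y z) ∧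
    (∀ i k j, |y.2.2.2.1 i k j - z.2.2.2.1 i k j| ≤ dist y z) ∧
    (∀ i k j, |y.2.2.2.2.1 i k j - z.2.2.2.2.1 i k j| ≤ dist y z) ∧
    (∀ i k j, |y.2.2.2.2.2.1 i k j - z.2.2.2.2.2.1 i k j| ≤ dist y z) ∧
    (∀ k, |y.2.2.2.2.2.2.1 k - z.2.2.2.2.2.2.1 k| ≤ dist y z) ∧
    dist y.2.2.2.2.2.2.2 z.2.2.2.2.2.2.2 ≤ dist y z := by
  have d1 : dist y.2 z.2 ≤ dist y z := prod_dist_snd _ _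
  have d2 : dist y.2.2 z.2.2 ≤ dist y z := (prod_dist_snd _ _).trans d1
  have d3 : dist y.2.2.2 z.2.2.2 ≤ dist y z := (prod_dist_snd _ _).trans d2
  have d4 : dist y.2.2.2.2 z.2.2.2.2 ≤ dist y z := (prod_dist_snd _ _).trans d3
  have d5 : dist y.2.2.2.2.2 z.2.2.2.2.2 ≤ dist y z := (prod_dist_snd _ _).trans d4
  have d6 : dist y.2.2.2.2.2.2 z.2.2.2.2.2.2 ≤ dist y z := (prod_dist_snd _ _).trans d5
  refine ⟨fun i k j => (pi3_abs_le_dist _ _ i k j).trans (prod_dist_fst _ _),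
    fun i k j => (pi3_abs_le_dist _ _ i k j).trans ((prod_dist_fst _ _).trans d1),
    fun i k j => (pi3_abs_le_dist _ _ i k j).trans ((prod_dist_fst _ _).trans d2),
    fun i k j => (pi3_abs_le_dist _ _ i k j).trans ((prod_dist_fst _ _).trans d3),
    fun i k j => (pi3_abs_le_dist _ _ i k j).trans ((prod_dist_fst _ _).trans d4),
    fun i k j => (pi3_abs_le_dist _ _ i k j).trans ((prod_dist_fst _ _).trans d5),
    fun k => (pi1_abs_le_dist _ _ k).trans ((prod_dist_fst _ _).trans d6),
    (prod_dist_snd _ _).trans d6⟩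

set_option maxRecDepth 8000

/-- on a compact arbitrage-free set `K₁` of market data, for a family
`{Φ_θ}` of continuous payoffs depending continuously (uniformly on `[0,B]^{nd}`)
on `θ`, the map `(K,π,S₀,θ) ↦ (D̲(Φ_θ), D̄(Φ_θ))` is continuous. -/
theorem stmt11 (n d J p : ℕ) (κ 𝔅 B : ℝ) (hκ : 0 ≤ κ) (h𝔅 : 0 < 𝔅) (hB : 0 < B)
    (Θ : Set (Fin p → ℝ)) (Φ : (Fin p → ℝ) → (ℕ → Fin d → ℝ) → ℝ)
    (hΦc : ∀ θ, Continuous (Φ θ))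
    (hΦΘ : ∀ θ ∈ Θ, ∀ ε > (0 : ℝ), ∃ δ > (0 : ℝ), ∀ θ' ∈ Θ, dist θ' θ < δ →
      ∀ s : ℕ → Fin d → ℝ, InBox n d B s → |Φ θ' s - Φ θ s| ≤ ε)
    (K1 : Set (MarketData n d J p)) (hK1 : IsCompact K1)
    (hθK : ∀ x ∈ K1, x.2.2.2.2.2.2.2 ∈ Θ)
    (hfin : ∀ x ∈ K1,
      (PriceUpperSetX n d J p κ 𝔅 B Φ x).Nonempty ∧
      BddBelow (PriceUpperSetX n d J p κ 𝔅 B Φ x) ∧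
      (PriceLowerSetX n d J p κ 𝔅 B Φ x).Nonempty ∧
      BddAbove (PriceLowerSetX n d J p κ 𝔅 B Φ x)) :
    ContinuousOn
      (fun x => (DlowX n d J p κ 𝔅 B Φ x, DbarX n d J p κ 𝔅 B Φ x)) K1 := by
  -- two-point estimates
  have key_ub : ∀ x ∈ K1, ∀ x' ∈ K1, ∀ η : ℝ, 0 ≤ η →
      (∀ s, InBox n d B s →
        |Φ x'.2.2.2.2.2.2.2 s - Φ x.2.2.2.2.2.2.2 s| ≤ η) →
      DbarX n d J p κ 𝔅 B Φ x'
        ≤ DbarX n d J p κ 𝔅 B Φ x + ((3 + κ) * 𝔅 * dist x' x + η) := by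
    intro x hx x' hx' η hη hΦd
    obtain ⟨b1, b2, b3, b4, b5, b6, b7, -⟩ := md_dist_bounds x' x
    have hD : (0:ℝ) ≤ dist x' x := dist_nonneg
    rw [← sub_le_iff_le_add]
    refine le_csInf (hfin x hx).1 ?_
    intro r hr
    obtain ⟨r', hmem, hle⟩ := upper_transfer n d J κ 𝔅 B (dist x' x) η hκ hD hη
      x.1 x.2.1 x.2.2.1 x.2.2.2.1 x.2.2.2.2.1 x.2.2.2.2.2.1
      x'.1 x'.2.1 x'.2.2.1 x'.2.2.2.1 x'.2.2.2.2.1 x'.2.2.2.2.2.1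
      x.2.2.2.2.2.2.1 x'.2.2.2.2.2.2.1
      (Φ x.2.2.2.2.2.2.2) (Φ x'.2.2.2.2.2.2.2)
      b1 b2 b3 b4 b5 b6 b7 hΦd r hr
    have h1 : DbarX n d J p κ 𝔅 B Φ x' ≤ r' := csInf_le (hfin x' hx').2.1 hmem
    linarith
  have key_lb : ∀ x ∈ K1, ∀ x' ∈ K1, ∀ η : ℝ, 0 ≤ η →
      (∀ s, InBox n d B s →
        |Φ x'.2.2.2.2.2.2.2 s - Φ x.2.2.2.2.2.2.2 s| ≤ η) →
      DlowX n d J p κ 𝔅 B Φ x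
        ≤ DlowX n d J p κ 𝔅 B Φ x' + ((3 + κ) * 𝔅 * dist x' x + η) := by
    intro x hx x' hx' η hη hΦd
    obtain ⟨b1, b2, b3, b4, b5, b6, b7, -⟩ := md_dist_bounds x' x
    have hD : (0:ℝ) ≤ dist x' x := dist_nonneg
    refine csSup_le (hfin x hx).2.2.1 ?_
    intro r hr
    obtain ⟨r', hmem, hge⟩ := lower_transfer n d J κ 𝔅 B (dist x' x) η hκ hD hη
      x.1 x.2.1 x.2.2.1 x.2.2.2.1 x.2.2.2.2.1 x.2.2.2.2.2.1
      x'.1 x'.2.1 x'.2.2.1 x'.2.2.2.1 x'.2.2.2.2.1 x'.2.2.2.2.2.1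
      x.2.2.2.2.2.2.1 x'.2.2.2.2.2.2.1
      (Φ x.2.2.2.2.2.2.2) (Φ x'.2.2.2.2.2.2.2)
      b1 b2 b3 b4 b5 b6 b7 hΦd r hr
    have h1 : r' ≤ DlowX n d J p κ 𝔅 B Φ x' := le_csSup (hfin x' hx').2.2.2 hmem
    linarith
  have hM : (0:ℝ) < (3 + κ) * 𝔅 := mul_pos (by linarith) h𝔅
  -- a common modulus argument
  have hmod : ∀ x ∈ K1, ∀ ε > (0:ℝ), ∃ δ > (0:ℝ), ∀ x' ∈ K1, dist x' x < δ →
      dist (DlowX n d J p κ 𝔅 B Φ x') (DlowX n d J p κ 𝔅 B Φ x) < ε ∧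
      dist (DbarX n d J p κ 𝔅 B Φ x') (DbarX n d J p κ 𝔅 B Φ x) < ε := by
    intro x hx ε hε
    obtain ⟨δ1, hδ1pos, hδ1⟩ := hΦΘ x.2.2.2.2.2.2.2 (hθK x hx) (ε/3) (by linarith)
    refine ⟨min δ1 (ε / (3 * ((3 + κ) * 𝔅 + 1))),
      lt_min hδ1pos (by positivity), ?_⟩
    intro x' hx' hd
    have hdθ : dist x'.2.2.2.2.2.2.2 x.2.2.2.2.2.2.2 < δ1 :=
      lt_of_le_of_lt (md_dist_bounds x' x).2.2.2.2.2.2.2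
        (hd.trans_le (min_le_left _ _))
    have hΦ1 : ∀ s, InBox n d B s →
        |Φ x'.2.2.2.2.2.2.2 s - Φ x.2.2.2.2.2.2.2 s| ≤ ε/3 :=
      hδ1 x'.2.2.2.2.2.2.2 (hθK x' hx') hdθ
    have hΦ2 : ∀ s, InBox n d B s →
        |Φ x.2.2.2.2.2.2.2 s - Φ x'.2.2.2.2.2.2.2 s| ≤ ε/3 := fun s hs => by
      rw [abs_sub_comm]; exact hΦ1 s hs
    have hε3 : (0:ℝ) ≤ ε/3 := by linarith
    have e1 := key_lb x hx x' hx' (ε/3) hε3 hΦ1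
    have e2 := key_lb x' hx' x hx (ε/3) hε3 hΦ2
    have e3 := key_ub x hx x' hx' (ε/3) hε3 hΦ1
    have e4 := key_ub x' hx' x hx (ε/3) hε3 hΦ2
    rw [dist_comm x x'] at e2 e4
    have hdd : dist x' x < ε / (3 * ((3 + κ) * 𝔅 + 1)) :=
      hd.trans_le (min_le_right _ _)
    have hbd : (3 + κ) * 𝔅 * dist x' x < ε/3 := by
      have h1 : (3 + κ) * 𝔅 * dist x' x
          ≤ ((3 + κ) * 𝔅 + 1) * dist x' x := by
        nlinarith [dist_nonneg (x := x') (y := x)]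
      have h2 : ((3 + κ) * 𝔅 + 1) * dist x' x
          < ((3 + κ) * 𝔅 + 1) * (ε / (3 * ((3 + κ) * 𝔅 + 1))) := by
        exact mul_lt_mul_of_pos_left hdd (by linarith)
      have h3 : ((3 + κ) * 𝔅 + 1) * (ε / (3 * ((3 + κ) * 𝔅 + 1))) = ε/3 := by
        field_simp
      linarith
    constructor <;> rw [Real.dist_eq, abs_lt] <;> constructor <;> linarith
  apply ContinuousOn.prodMk
  · rw [Metric.continuousOn_iff]
    intro x hx ε hε
    obtain ⟨δ, hδpos, hδ⟩ := hmod x hx ε hε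
    exact ⟨δ, hδpos, fun x' hx' hd => (hδ x' hx' hd).1⟩
  · rw [Metric.continuousOn_iff]
    intro x hx ε hε
    obtain ⟨δ, hδpos, hδ⟩ := hmod x hx ε hε
    exact ⟨δ, hδpos, fun x' hx' hd => (hδ x' hx' hd).2⟩
end

section
/- In the setting of the super-hedging problem with finite bounds 𝔅, B, if a strategy (a, c_{ijk}, p_{ijk}, Δ_i^k) super-replicates Φ_θ on [0,B]^{nd} and satisfies Σ(c,p,Δ) ≤ 𝔅, and if perturbed market data (K̃, S̃_{t0}, θ̃) satisfies the δ-closeness condition, then the modified strategy with cash position a + δ̃ + δ(1+κ)𝔅 (and unchanged c, p, Δ), where δ̃ bounds the sup-norm distance ‖Φ_θ − Φ_{θ̃}‖_{∞,B} < δ̃, super-replicates Φ_{θ̃} on [0,B]^{nd} under the perturbed parameters. -/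
open MeasureTheory Filter Topology
open scoped BigOperators

lemma aux_core (c1 c2 m m' δ : ℝ) (h1 : 0 ≤ c1) (h2 : 0 ≤ c2) (hm : |m - m'| ≤ δ) :
    (c1 - c2) * m ≤ (c1 - c2) * m' + δ * (c1 + c2) := by
  have hc : |c1 - c2| ≤ c1 + c2 := abs_le.mpr ⟨by linarith, by linarith⟩
  have h3 : |(c1 - c2) * (m - m')| ≤ (c1 + c2) * δ := by
    rw [abs_mul]
    exact mul_le_mul hc hm (abs_nonneg _) (by linarith)
  have h4 := le_abs_self ((c1 - c2) * (m - m'))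
  nlinarith [h3, h4]

lemma aux_call (c1 c2 K K' x δ : ℝ) (h1 : 0 ≤ c1) (h2 : 0 ≤ c2) (hK : |K - K'| < δ) :
    (c1 - c2) * max (x - K) 0 ≤ (c1 - c2) * max (x - K') 0 + δ * (c1 + c2) := by
  apply aux_core _ _ _ _ _ h1 h2
  have h := abs_max_sub_max_le_abs (x - K) (x - K') 0
  rw [show x - K - (x - K') = -(K - K') by ring, abs_neg] at h
  exact h.trans hK.le

lemma aux_put (c1 c2 K K' x δ : ℝ) (h1 : 0 ≤ c1) (h2 : 0 ≤ c2) (hK : |K - K'| < δ) :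
    (c1 - c2) * max (K - x) 0 ≤ (c1 - c2) * max (K' - x) 0 + δ * (c1 + c2) := by
  apply aux_core _ _ _ _ _ h1 h2
  have h := abs_max_sub_max_le_abs (K - x) (K' - x) 0
  rw [show K - x - (K' - x) = K - K' by ring] at h
  exact h.trans hK.le

lemma aux_spot (κ δ D S0 S0' x : ℝ) (hκ : 0 ≤ κ) (hS : |S0 - S0'| < δ) :
    D * (x - S0) - κ * |S0| * |D| ≤
      D * (x - S0') - κ * |S0'| * |D| + δ * (1 + κ) * |D| := by
  have h1 : |S0'| - |S0| ≤ |S0 - S0'| := by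
    rw [abs_sub_comm]; exact abs_sub_abs_le_abs_sub _ _
  have h2 : |D * (S0' - S0)| ≤ |D| * δ := by
    rw [abs_mul]
    apply mul_le_mul_of_nonneg_left _ (abs_nonneg D)
    rw [abs_sub_comm]; exact hS.le
  have h4 := (le_abs_self (D * (S0' - S0))).trans h2
  have h5 : κ * |D| * (|S0'| - |S0|) ≤ κ * |D| * δ :=
    mul_le_mul_of_nonneg_left (by linarith) (mul_nonneg hκ (abs_nonneg _))
  nlinarith [h4, h5]

/-- if a strategy super-replicates `Φ_θ` on `[0,B]^{nd}` with
`Σ ≤ 𝔅`, and the market data is `δ`-close while `‖Φ_θ − Φ_θ̃‖_{∞,B} ≤ δ̃`, then the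
same strategy with cash shifted to `a + δ̃ + δ(1+κ)𝔅` super-replicates `Φ_θ̃`
under the perturbed strikes and spot. -/
theorem stmt12 (n d J : ℕ) (κ 𝔅 B δ δ' : ℝ)
    (hκ : 0 ≤ κ) (hδ : 0 ≤ δ) (hδ' : 0 ≤ δ') (hB : 0 < B)
    (Kc Kp Kc' Kp' : Fin n → Fin d → Fin J → ℝ) (S0 S0' : Fin d → ℝ)
    (Φθ Φθ' : (ℕ → Fin d → ℝ) → ℝ)
    (a : ℝ) (cP cM pP pM : Fin n → Fin d → Fin J → ℝ)
    (Δ0 : Fin d → ℝ) (Δ : ℕ → Fin d → ((ℕ → Fin d → ℝ) → ℝ))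
    (hcP : ∀ i k j, 0 ≤ cP i k j) (hcM : ∀ i k j, 0 ≤ cM i k j)
    (hpP : ∀ i k j, 0 ≤ pP i k j) (hpM : ∀ i k j, 0 ≤ pM i k j)
    (hSig : Sig n d J cP cM pP pM Δ0 Δ ≤ 𝔅)
    (hsup : ∀ s : ℕ → Fin d → ℝ, InBox n d B s →
      Φθ s ≤ Psi n d J κ Kc Kp S0 a cP cM pP pM Δ0 Δ s)
    (hKc : ∀ i k j, |Kc i k j - Kc' i k j| < δ)
    (hKp : ∀ i k j, |Kp i k j - Kp' i k j| < δ)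
    (hS0 : ∀ k, |S0 k - S0' k| < δ)
    (hΦ : ∀ s : ℕ → Fin d → ℝ, InBox n d B s → |Φθ s - Φθ' s| ≤ δ') :
    ∀ s : ℕ → Fin d → ℝ, InBox n d B s →
      Φθ' s ≤ Psi n d J κ Kc' Kp' S0'
        (a + δ' + δ * (1 + κ) * 𝔅) cP cM pP pM Δ0 Δ s := by
  intro s hs
  have hΦ1 : Φθ' s ≤ Φθ s + δ' := by
    have h := hΦ s hs
    rw [abs_le] at h
    linarith [h.1]
  have hΨ := hsup s hs
  have hC : (∑ i : Fin n, ∑ k : Fin d, ∑ j : Fin J,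
        (cP i k j - cM i k j) * max (s (i.1 + 1) k - Kc i k j) 0)
      ≤ (∑ i : Fin n, ∑ k : Fin d, ∑ j : Fin J,
        (cP i k j - cM i k j) * max (s (i.1 + 1) k - Kc' i k j) 0)
        + δ * (∑ i : Fin n, ∑ k : Fin d, ∑ j : Fin J, (cP i k j + cM i k j)) := by
    have h : (∑ i : Fin n, ∑ k : Fin d, ∑ j : Fin J,
        (cP i k j - cM i k j) * max (s (i.1 + 1) k - Kc i k j) 0)
      ≤ ∑ i : Fin n, ∑ k : Fin d, ∑ j : Fin J,
        ((cP i k j - cM i k j) * max (s (i.1 + 1) k - Kc' i k j) 0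
          + δ * (cP i k j + cM i k j)) := by
      refine Finset.sum_le_sum fun i _ => Finset.sum_le_sum fun k _ => Finset.sum_le_sum fun j _ => ?_
      exact aux_call _ _ _ _ _ _ (hcP i k j) (hcM i k j) (hKc i k j)
    refine h.trans (le_of_eq ?_)
    simp [Finset.sum_add_distrib, Finset.mul_sum, mul_add]
  have hP : (∑ i : Fin n, ∑ k : Fin d, ∑ j : Fin J,
        (pP i k j - pM i k j) * max (Kp i k j - s (i.1 + 1) k) 0)
      ≤ (∑ i : Fin n, ∑ k : Fin d, ∑ j : Fin J,
        (pP i k j - pM i k j) * max (Kp' i k j - s (i.1 + 1) k) 0)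
        + δ * (∑ i : Fin n, ∑ k : Fin d, ∑ j : Fin J, (pP i k j + pM i k j)) := by
    have h : (∑ i : Fin n, ∑ k : Fin d, ∑ j : Fin J,
        (pP i k j - pM i k j) * max (Kp i k j - s (i.1 + 1) k) 0)
      ≤ ∑ i : Fin n, ∑ k : Fin d, ∑ j : Fin J,
        ((pP i k j - pM i k j) * max (Kp' i k j - s (i.1 + 1) k) 0
          + δ * (pP i k j + pM i k j)) := by
      refine Finset.sum_le_sum fun i _ => Finset.sum_le_sum fun k _ => Finset.sum_le_sum fun j _ => ?_
      exact aux_put _ _ _ _ _ _ (hpP i k j) (hpM i k j) (hKp i k j)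
    refine h.trans (le_of_eq ?_)
    simp [Finset.sum_add_distrib, Finset.mul_sum, mul_add]
  have hS : (∑ k : Fin d, (Δ0 k * (s 1 k - S0 k) - κ * |S0 k| * |Δ0 k|))
      ≤ (∑ k : Fin d, (Δ0 k * (s 1 k - S0' k) - κ * |S0' k| * |Δ0 k|))
        + δ * (1 + κ) * (∑ k : Fin d, |Δ0 k|) := by
    have h : (∑ k : Fin d, (Δ0 k * (s 1 k - S0 k) - κ * |S0 k| * |Δ0 k|))
        ≤ ∑ k : Fin d, ((Δ0 k * (s 1 k - S0' k) - κ * |S0' k| * |Δ0 k|)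
            + δ * (1 + κ) * |Δ0 k|) := by
      refine Finset.sum_le_sum fun k _ => ?_
      exact aux_spot _ _ _ _ _ _ hκ (hS0 k)
    refine h.trans (le_of_eq ?_)
    simp [Finset.sum_add_distrib, Finset.mul_sum, mul_add]
  -- bound the total perturbation using Sig ≤ 𝔅
  set Mc := ∑ i : Fin n, ∑ k : Fin d, ∑ j : Fin J, (cP i k j + cM i k j) with hMc
  set Mp := ∑ i : Fin n, ∑ k : Fin d, ∑ j : Fin J, (pP i k j + pM i k j) with hMp
  set M1 := ∑ i : Fin n, ∑ k : Fin d, ∑ j : Fin J,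
      (cP i k j + cM i k j + pP i k j + pM i k j) with hM1
  set M2 := ∑ k : Fin d, |Δ0 k| with hM2
  set M3 := ∑ k : Fin d, ∑ i ∈ Finset.Ico 1 n, ⨆ s : ℕ → Fin d → ℝ, |Δ i k s| with hM3
  have hsplit : M1 = Mc + Mp := by
    rw [hM1, hMc, hMp, ← Finset.sum_add_distrib]
    refine Finset.sum_congr rfl fun i _ => ?_
    rw [← Finset.sum_add_distrib]
    refine Finset.sum_congr rfl fun k _ => ?_
    rw [← Finset.sum_add_distrib]
    exact Finset.sum_congr rfl fun j _ => by ring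
  have hM1n : 0 ≤ M1 := by
    refine Finset.sum_nonneg fun i _ => Finset.sum_nonneg fun k _ =>
      Finset.sum_nonneg fun j _ => ?_
    have := hcP i k j; have := hcM i k j; have := hpP i k j; have := hpM i k j
    linarith
  have hM3n : 0 ≤ M3 := by
    refine Finset.sum_nonneg fun k _ => Finset.sum_nonneg fun i _ => ?_
    exact Real.iSup_nonneg fun s => abs_nonneg _
  have hSig' : M1 + M2 + M3 ≤ 𝔅 := by
    have := hSig; rw [Sig] at this
    exact this
  have h0 : (0:ℝ) ≤ δ * (1 + κ) := by positivity
  have e2 : δ * M1 ≤ δ * (1 + κ) * M1 := by nlinarith [mul_nonneg (mul_nonneg hδ hκ) hM1n]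
  have e3 : δ * (1 + κ) * (M1 + M2) ≤ δ * (1 + κ) * 𝔅 :=
    mul_le_mul_of_nonneg_left (by linarith) h0
  have hb : δ * Mc + δ * Mp + δ * (1 + κ) * M2 ≤ δ * (1 + κ) * 𝔅 := by nlinarith [hsplit]
  have key : Psi n d J κ Kc Kp S0 a cP cM pP pM Δ0 Δ s + δ'
      ≤ Psi n d J κ Kc' Kp' S0' (a + δ' + δ * (1 + κ) * 𝔅) cP cM pP pM Δ0 Δ s := by
    rw [Psi, Psi]
    linarith [hC, hP, hS, hb]
  linarith [hΦ1, hΨ, key]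
end

section
/- Under the δ-closeness of market data (K, π, S_{t0}) and (K̃, π̃, S̃_{t0}) and for a strategy with Σ(c,p,Δ) ≤ 𝔅, the costs of the strategy and its shifted version differ by at most δ̃ + δ(1+κ)𝔅 + δ𝔅: |C(Ψ^{(K̃,S̃_{t0})}_{(δ̃+δ(1+κ)𝔅+a, c, p, Δ)}, π̃) − C(Ψ^{(K,S_{t0})}_{(a,c,p,Δ)}, π)| ≤ δ̃ + δ(1+κ)𝔅 + δ𝔅. -/
open MeasureTheory Filter Topology
open scoped BigOperators

/-! For fixed positions the cost is additive in the cash and the prices jointly, so the difference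
of the two costs is the cost of the cash shift together with the price differences. Each price
difference is at most `δ` and the positions are nonnegative, so that cost exceeds the shift by at
most `δ` times the total option position, which `Σ ≤ 𝔅` bounds. -/

noncomputable def optionSize (n d J : ℕ) (cP cM pP pM : Fin n → Fin d → Fin J → ℝ) : ℝ :=
  ∑ i : Fin n, ∑ k : Fin d, ∑ j : Fin J, (cP i k j + cM i k j + pP i k j + pM i k j)

section

variable {n d J : ℕ}

theorem optionSize_nonneg {cP cM pP pM : Fin n → Fin d → Fin J → ℝ}
    (hcP : ∀ i k j, 0 ≤ cP i k j) (hcM : ∀ i k j, 0 ≤ cM i k j)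
    (hpP : ∀ i k j, 0 ≤ pP i k j) (hpM : ∀ i k j, 0 ≤ pM i k j) :
    0 ≤ optionSize n d J cP cM pP pM :=
  Finset.sum_nonneg fun i _ => Finset.sum_nonneg fun k _ => Finset.sum_nonneg fun j _ => by
    linarith [hcP i k j, hcM i k j, hpP i k j, hpM i k j]

theorem optionSize_le_Sig (cP cM pP pM : Fin n → Fin d → Fin J → ℝ)
    (Δ0 : Fin d → ℝ) (Δ : ℕ → Fin d → ((ℕ → Fin d → ℝ) → ℝ)) :
    optionSize n d J cP cM pP pM ≤ Sig n d J cP cM pP pM Δ0 Δ := by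
  have hΔ0 : 0 ≤ ∑ k : Fin d, |Δ0 k| := Finset.sum_nonneg fun k _ => abs_nonneg _
  have hΔ : 0 ≤ ∑ k : Fin d, ∑ i ∈ Finset.Ico 1 n, ⨆ s : ℕ → Fin d → ℝ, |Δ i k s| :=
    Finset.sum_nonneg fun k _ => Finset.sum_nonneg fun i _ =>
      Real.iSup_nonneg fun s => abs_nonneg _
  unfold Sig optionSize
  linarith

theorem Cost_sub_Cost (a a' : ℝ) (cP cM pP pM πcP πcM πpP πpM πcP' πcM' πpP' πpM' :
      Fin n → Fin d → Fin J → ℝ) :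
    Cost n d J a' cP cM pP pM πcP' πcM' πpP' πpM' - Cost n d J a cP cM pP pM πcP πcM πpP πpM
      = Cost n d J (a' - a) cP cM pP pM (πcP' - πcP) (πcM' - πcM) (πpP' - πpP) (πpM' - πpM) := by
  simp only [Cost, Pi.sub_apply, mul_sub, Finset.sum_sub_distrib]
  ring

theorem abs_sum_sum_sum_le {ι κ μ : Type*} [Fintype ι] [Fintype κ] [Fintype μ]
    {f g : ι → κ → μ → ℝ} (h : ∀ i k j, |f i k j| ≤ g i k j) :
    |∑ i, ∑ k, ∑ j, f i k j| ≤ ∑ i, ∑ k, ∑ j, g i k j :=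
  (Finset.abs_sum_le_sum_abs _ _).trans <| Finset.sum_le_sum fun i _ =>
    (Finset.abs_sum_le_sum_abs _ _).trans <| Finset.sum_le_sum fun k _ =>
      (Finset.abs_sum_le_sum_abs _ _).trans <| Finset.sum_le_sum fun j _ => h i k j

theorem abs_Cost_le {δ : ℝ} (a : ℝ) {cP cM pP pM πcP πcM πpP πpM : Fin n → Fin d → Fin J → ℝ}
    (hcP : ∀ i k j, 0 ≤ cP i k j) (hcM : ∀ i k j, 0 ≤ cM i k j)
    (hpP : ∀ i k j, 0 ≤ pP i k j) (hpM : ∀ i k j, 0 ≤ pM i k j)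
    (hπcP : ∀ i k j, |πcP i k j| ≤ δ) (hπcM : ∀ i k j, |πcM i k j| ≤ δ)
    (hπpP : ∀ i k j, |πpP i k j| ≤ δ) (hπpM : ∀ i k j, |πpM i k j| ≤ δ) :
    |Cost n d J a cP cM pP pM πcP πcM πpP πpM| ≤ |a| + δ * optionSize n d J cP cM pP pM := by
  have hterm : ∀ {x p : ℝ}, 0 ≤ x → |p| ≤ δ → |x * p| ≤ x * δ := fun hx hp => by
    rw [abs_mul, abs_of_nonneg hx]
    exact mul_le_mul_of_nonneg_left hp hx
  have hsum := abs_sum_sum_sum_le (f := fun i k j =>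
      cP i k j * πcP i k j - cM i k j * πcM i k j + (pP i k j * πpP i k j - pM i k j * πpM i k j))
    (g := fun i k j => δ * (cP i k j + cM i k j + pP i k j + pM i k j)) fun i k j => by
      have h1 := hterm (hcP i k j) (hπcP i k j)
      have h2 := hterm (hcM i k j) (hπcM i k j)
      have h3 := hterm (hpP i k j) (hπpP i k j)
      have h4 := hterm (hpM i k j) (hπpM i k j)
      calc _ ≤ |cP i k j * πcP i k j| + |cM i k j * πcM i k j|
              + (|pP i k j * πpP i k j| + |pM i k j * πpM i k j|) :=
            (abs_add_le _ _).trans (add_le_add (abs_sub _ _) (abs_sub _ _))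
        _ ≤ _ := by linarith
  simp only [← Finset.mul_sum] at hsum
  rw [Cost, add_assoc]
  refine (abs_add_le _ _).trans ?_
  gcongr
  simpa only [optionSize, Finset.sum_add_distrib] using hsum

end

/-- if bid-ask prices are componentwise `δ`-close and `Σ ≤ 𝔅`, then
the costs of a strategy and of its cash-shifted version (shift `δ̃ + δ(1+κ)𝔅`)
differ by at most `δ̃ + δ(1+κ)𝔅 + δ𝔅`. -/
theorem stmt13 (n d J : ℕ) (κ 𝔅 δ δ' : ℝ)
    (hκ : 0 ≤ κ) (hδ : 0 ≤ δ) (hδ' : 0 ≤ δ')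
    (a : ℝ) (cP cM pP pM : Fin n → Fin d → Fin J → ℝ)
    (Δ0 : Fin d → ℝ) (Δ : ℕ → Fin d → ((ℕ → Fin d → ℝ) → ℝ))
    (πcP πcM πpP πpM πcP' πcM' πpP' πpM' : Fin n → Fin d → Fin J → ℝ)
    (hcP : ∀ i k j, 0 ≤ cP i k j) (hcM : ∀ i k j, 0 ≤ cM i k j)
    (hpP : ∀ i k j, 0 ≤ pP i k j) (hpM : ∀ i k j, 0 ≤ pM i k j)
    (hSig : Sig n d J cP cM pP pM Δ0 Δ ≤ 𝔅)
    (hπ1 : ∀ i k j, |πcP i k j - πcP' i k j| < δ)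
    (hπ2 : ∀ i k j, |πcM i k j - πcM' i k j| < δ)
    (hπ3 : ∀ i k j, |πpP i k j - πpP' i k j| < δ)
    (hπ4 : ∀ i k j, |πpM i k j - πpM' i k j| < δ) :
    |Cost n d J (a + δ' + δ * (1 + κ) * 𝔅) cP cM pP pM πcP' πcM' πpP' πpM'
      - Cost n d J a cP cM pP pM πcP πcM πpP πpM|
      ≤ δ' + δ * (1 + κ) * 𝔅 + δ * 𝔅 := by
  have hsize : optionSize n d J cP cM pP pM ≤ 𝔅 := (optionSize_le_Sig cP cM pP pM Δ0 Δ).trans hSig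
  have h𝔅 : 0 ≤ 𝔅 := (optionSize_nonneg hcP hcM hpP hpM).trans hsize
  have hshift : 0 ≤ δ' + δ * (1 + κ) * 𝔅 := by positivity
  have hclose : ∀ {π π' : Fin n → Fin d → Fin J → ℝ}, (∀ i k j, |π i k j - π' i k j| < δ) →
      ∀ i k j, |(π' - π) i k j| ≤ δ := fun h i k j => by
    rw [Pi.sub_apply, Pi.sub_apply, Pi.sub_apply, abs_sub_comm]
    exact (h i k j).le
  rw [Cost_sub_Cost, add_assoc, add_sub_cancel_left]
  calc _ ≤ |δ' + δ * (1 + κ) * 𝔅| + δ * optionSize n d J cP cM pP pM :=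
        abs_Cost_le _ hcP hcM hpP hpM (hclose hπ1) (hclose hπ2) (hclose hπ3) (hclose hπ4)
    _ ≤ δ' + δ * (1 + κ) * 𝔅 + δ * 𝔅 := by
        rw [abs_of_nonneg hshift]
        gcongr
end
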